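/- arXiv:1601.05839 — 12 statements merged into one kernel-verified Lean document; each statement's English description precedes it below -/
import Mathlib

section
/- Let α ∈ (0,1), κ = α^{1/(1-α)}, and let C_M, C_S, C_U > 0 and N_m, N_f > 0. Then the mixed-service equilibrium system — K_U, K_M, K_S > 0; C_M/K_M = C_S/K_S = R where R = (C_M + C_S)/(K_M + K_S); u(R) − R·u'(R) = u(C_U/K_U); and K_U + K_M + K_S = N_m + N_f — has the unique solution K_U = (N_f+N_m)·C_U/(C_U + κ(C_M+C_S)), K_M = (N_f+N_m)·κC_M/(C_U + κ(C_M+C_S)), K_S = (N_f+N_m)·κC_S/(C_U + κ(C_M+C_S)). -/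
open Real

/-!
A priced user's net payoff at rate `R` is `u(R) - R u'(R) = α u(R) = u(κ R)`, because
`κ ^ (1 - α) = α`. Since `u` is injective on `[0, ∞)`, the indifference condition says that
unlicensed users get rate `κ R`. Thus every user of every network consumes its network's capacity
at a rate proportional to `1` (unlicensed) or `κ` (priced), and the user masses are the shares of
`N_m + N_f` proportional to `C_U`, `κ C_M`, `κ C_S`.
-/

/-- `N` is the total user mass and `(C_M + C_S) / (K_M + K_S)` the common per-user rate `R` of
priced users. -/
def IsMixedEquilibrium (α C_M C_S C_U N K_U K_M K_S : ℝ) : Prop :=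
  0 < K_U ∧ 0 < K_M ∧ 0 < K_S ∧
    C_M / K_M = (C_M + C_S) / (K_M + K_S) ∧
    C_S / K_S = (C_M + C_S) / (K_M + K_S) ∧
    ((C_M + C_S) / (K_M + K_S)) ^ (1 - α) / (1 - α)
        - ((C_M + C_S) / (K_M + K_S)) * ((C_M + C_S) / (K_M + K_S)) ^ (-α)
      = (C_U / K_U) ^ (1 - α) / (1 - α) ∧
    K_U + K_M + K_S = N

section AlphaFair

variable {α : ℝ}

lemma alphaFair_inj (hα1 : α < 1) {x y : ℝ} (hx : 0 ≤ x) (hy : 0 ≤ y) :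
    x ^ (1 - α) / (1 - α) = y ^ (1 - α) / (1 - α) ↔ x = y := by
  rw [div_left_inj' (sub_ne_zero.2 hα1.ne'), rpow_left_inj hx hy (sub_ne_zero.2 hα1.ne')]

lemma rpow_one_sub_alphaFairScale (hα0 : 0 < α) (hα1 : α < 1) :
    (α ^ (1 / (1 - α))) ^ (1 - α) = α := by
  rw [← rpow_mul hα0.le, one_div_mul_cancel (sub_ne_zero.2 hα1.ne'), rpow_one]

lemma alphaFair_net_payoff (hα0 : 0 < α) (hα1 : α < 1) {R : ℝ} (hR : 0 < R) :
    R ^ (1 - α) / (1 - α) - R * R ^ (-α) = (α ^ (1 / (1 - α)) * R) ^ (1 - α) / (1 - α) := by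
  have hRR : R * R ^ (-α) = R ^ (1 - α) := by
    rw [sub_eq_add_neg, rpow_add hR, rpow_one]
  rw [hRR, mul_rpow (by positivity) hR.le, rpow_one_sub_alphaFairScale hα0 hα1]
  field_simp [sub_ne_zero.2 hα1.ne']
  ring

end AlphaFair

lemma eq_proportional_shares {a b c x y z t N : ℝ} (hx : x * t = a) (hy : y * t = b)
    (hz : z * t = c) (hN : x + y + z = N) (habc : a + b + c ≠ 0) :
    x = N * a / (a + b + c) ∧ y = N * b / (a + b + c) ∧ z = N * c / (a + b + c) := by
  have hsum : a + b + c = N * t := by rw [← hN, ← hx, ← hy, ← hz]; ring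
  refine ⟨?_, ?_, ?_⟩ <;> rw [eq_div_iff habc, hsum]
  · rw [← hx]; ring
  · rw [← hy]; ring
  · rw [← hz]; ring

section Equilibrium

variable {α κ C_M C_S C_U N K_U K_M K_S : ℝ}

lemma IsMixedEquilibrium.eq_shares (hα0 : 0 < α) (hα1 : α < 1) (hκ : κ = α ^ (1 / (1 - α)))
    (hCM : 0 < C_M) (hCS : 0 < C_S) (hCU : 0 < C_U)
    (h : IsMixedEquilibrium α C_M C_S C_U N K_U K_M K_S) :
    K_U = N * C_U / (C_U + κ * (C_M + C_S)) ∧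
      K_M = N * (κ * C_M) / (C_U + κ * (C_M + C_S)) ∧
      K_S = N * (κ * C_S) / (C_U + κ * (C_M + C_S)) := by
  obtain ⟨hKU, hKM, hKS, hM, hS, hpay, hsum⟩ := h
  set R := (C_M + C_S) / (K_M + K_S)
  have hR : 0 < R := div_pos (add_pos hCM hCS) (add_pos hKM hKS)
  have hκ0 : 0 < κ := hκ ▸ rpow_pos_of_pos hα0 _
  have hUR : K_U * (κ * R) = C_U := by
    rw [alphaFair_net_payoff hα0 hα1 hR, ← hκ,
      alphaFair_inj hα1 (by positivity) (by positivity)] at hpay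
    rw [hpay]
    field_simp
  have hMR : K_M * (κ * R) = κ * C_M := by rw [← hM]; field_simp
  have hSR : K_S * (κ * R) = κ * C_S := by rw [← hS]; field_simp
  have hD : C_U + κ * C_M + κ * C_S ≠ 0 := by positivity
  simpa only [mul_add, add_assoc] using eq_proportional_shares hUR hMR hSR hsum hD

lemma isMixedEquilibrium_shares (hα0 : 0 < α) (hα1 : α < 1) (hκ : κ = α ^ (1 / (1 - α)))
    (hCM : 0 < C_M) (hCS : 0 < C_S) (hCU : 0 < C_U) (hN : 0 < N) :
    IsMixedEquilibrium α C_M C_S C_U N (N * C_U / (C_U + κ * (C_M + C_S)))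
      (N * (κ * C_M) / (C_U + κ * (C_M + C_S))) (N * (κ * C_S) / (C_U + κ * (C_M + C_S))) := by
  have hκ0 : 0 < κ := hκ ▸ rpow_pos_of_pos hα0 _
  have hD : 0 < C_U + κ * (C_M + C_S) := by positivity
  simp only [mul_div_right_comm N _ (C_U + κ * (C_M + C_S))]
  set s := N / (C_U + κ * (C_M + C_S)) with hs
  have hs0 : 0 < s := by positivity
  have hR : (C_M + C_S) / (s * (κ * C_M) + s * (κ * C_S)) = (s * κ)⁻¹ := by
    rw [show s * (κ * C_M) + s * (κ * C_S) = s * κ * (C_M + C_S) by ring,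
      div_mul_cancel_right₀ (by positivity)]
  refine ⟨by positivity, by positivity, by positivity, ?_, ?_, ?_, ?_⟩
  · rw [hR, ← mul_assoc, div_mul_cancel_right₀ hCM.ne']
  · rw [hR, ← mul_assoc, div_mul_cancel_right₀ hCS.ne']
  · rw [hR, alphaFair_net_payoff hα0 hα1 (by positivity), ← hκ, div_mul_cancel_right₀ hCU.ne']
    congr 2
    field_simp
  · rw [hs]
    field_simp
    ring

end Equilibrium

/-- the mixed-service equilibrium system has the unique solution
`K_U = (N_f+N_m)·C_U/(C_U + κ(C_M+C_S))`, `K_M = (N_f+N_m)·κC_M/(C_U + κ(C_M+C_S))`,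
`K_S = (N_f+N_m)·κC_S/(C_U + κ(C_M+C_S))`. -/
theorem stmt2 (α κ C_M C_S C_U N_m N_f : ℝ) (hα0 : 0 < α) (hα1 : α < 1)
    (hκ : κ = α ^ (1 / (1 - α)))
    (hCM : 0 < C_M) (hCS : 0 < C_S) (hCU : 0 < C_U) (hNm : 0 < N_m) (hNf : 0 < N_f)
    (K_U K_M K_S : ℝ) :
    (0 < K_U ∧ 0 < K_M ∧ 0 < K_S ∧
      C_M / K_M = (C_M + C_S) / (K_M + K_S) ∧
      C_S / K_S = (C_M + C_S) / (K_M + K_S) ∧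
      ((C_M + C_S) / (K_M + K_S)) ^ (1 - α) / (1 - α)
          - ((C_M + C_S) / (K_M + K_S)) * ((C_M + C_S) / (K_M + K_S)) ^ (-α)
        = (C_U / K_U) ^ (1 - α) / (1 - α) ∧
      K_U + K_M + K_S = N_m + N_f)
    ↔ (K_U = (N_f + N_m) * C_U / (C_U + κ * (C_M + C_S)) ∧
       K_M = (N_f + N_m) * (κ * C_M) / (C_U + κ * (C_M + C_S)) ∧
       K_S = (N_f + N_m) * (κ * C_S) / (C_U + κ * (C_M + C_S))) := by
  rw [add_comm N_f N_m]
  constructor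
  · exact IsMixedEquilibrium.eq_shares hα0 hα1 hκ hCM hCS hCU
  · rintro ⟨rfl, rfl, rfl⟩
    exact isMixedEquilibrium_shares hα0 hα1 hκ hCM hCS hCU (add_pos hNm hNf)
end

section
/- Let α ∈ (0,1), κ = α^{1/(1-α)}, and let C_S, C_U > 0 and N_f > 0. Then the separate-service equilibrium system — K_S, K_U > 0; u(C_S/K_S) − (C_S/K_S)·u'(C_S/K_S) = u(C_U/K_U); K_S + K_U = N_f — has the unique solution K_S = N_f·κC_S/(κC_S + C_U) and K_U = N_f·C_U/(κC_S + C_U). -/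
/-!
Writing `u(r) = r^(1-α)/(1-α)`, the identity `r · u'(r) = r^(1-α)` gives `u(r) - r u'(r) = α u(r)`.
So the indifference condition says `(C_U/K_U)^(1-α) = α (C_S/K_S)^(1-α)`, i.e. `C_U/K_U = κ C_S/K_S`:
the fixed users split `N_f` in the proportion `κ C_S : C_U`.
-/

open Real

noncomputable def fairUtility (α r : ℝ) : ℝ := r ^ (1 - α) / (1 - α)

lemma fairUtility_sub_mul_rpow_neg {α x : ℝ} (hα : α ≠ 1) (hx : 0 ≤ x) :
    fairUtility α x - x * x ^ (-α) = α * fairUtility α x := by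
  have h1α : 1 - α ≠ 0 := sub_ne_zero.mpr hα.symm
  have hsplit : x ^ (1 - α) = x * x ^ (-α) := by
    rw [← rpow_one_add' hx (by simpa [sub_eq_add_neg] using h1α), sub_eq_add_neg]
  rw [fairUtility, ← hsplit]
  field_simp
  ring

lemma fairUtility_sub_mul_rpow_neg_eq_iff {α x y : ℝ} (hα0 : 0 ≤ α) (hα1 : α ≠ 1)
    (hx : 0 ≤ x) (hy : 0 ≤ y) :
    fairUtility α x - x * x ^ (-α) = fairUtility α y ↔ y = α ^ (1 / (1 - α)) * x := by
  have h1α : 1 - α ≠ 0 := sub_ne_zero.mpr hα1.symm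
  have hscale : α * x ^ (1 - α) = (α ^ (1 / (1 - α)) * x) ^ (1 - α) := by
    rw [mul_rpow (by positivity) hx, ← rpow_mul hα0, one_div, inv_mul_cancel₀ h1α, rpow_one]
  rw [fairUtility_sub_mul_rpow_neg hα1 hx, fairUtility, fairUtility, ← mul_div_assoc,
    div_left_inj' h1α, hscale, rpow_left_inj (by positivity) hy h1α, eq_comm]

lemma add_eq_and_mul_eq_mul_iff {a b N x y : ℝ} (hab : a + b ≠ 0) :
    (x + y = N ∧ b * x = a * y) ↔ (x = N * a / (a + b) ∧ y = N * b / (a + b)) := by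
  constructor
  · rintro ⟨hsum, hprop⟩
    subst hsum
    constructor <;> field_simp <;> linarith
  · rintro ⟨rfl, rfl⟩
    constructor <;> field_simp

/-- the separate-service equilibrium system has the unique solution
`K_S = N_f·κC_S/(κC_S + C_U)` and `K_U = N_f·C_U/(κC_S + C_U)`. -/
theorem stmt3 (α κ C_S C_U N_f : ℝ) (hα0 : 0 < α) (hα1 : α < 1)
    (hκ : κ = α ^ (1 / (1 - α)))
    (hCS : 0 < C_S) (hCU : 0 < C_U) (hNf : 0 < N_f)
    (K_S K_U : ℝ) :
    (0 < K_S ∧ 0 < K_U ∧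
      (C_S / K_S) ^ (1 - α) / (1 - α) - (C_S / K_S) * (C_S / K_S) ^ (-α)
        = (C_U / K_U) ^ (1 - α) / (1 - α) ∧
      K_S + K_U = N_f)
    ↔ (K_S = N_f * (κ * C_S) / (κ * C_S + C_U) ∧
       K_U = N_f * C_U / (κ * C_S + C_U)) := by
  have hκpos : 0 < κ := hκ ▸ rpow_pos_of_pos hα0 _
  have hsplit := add_eq_and_mul_eq_mul_iff (a := κ * C_S) (b := C_U) (N := N_f) (x := K_S) (y := K_U)
    (by positivity)
  have hindiff {K_S K_U : ℝ} (hKS : 0 < K_S) (hKU : 0 < K_U) :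
      fairUtility α (C_S / K_S) - C_S / K_S * (C_S / K_S) ^ (-α) = fairUtility α (C_U / K_U) ↔
        C_U * K_S = κ * C_S * K_U := by
    rw [fairUtility_sub_mul_rpow_neg_eq_iff hα0.le hα1.ne (by positivity) (by positivity), ← hκ]
    field_simp
  constructor
  · rintro ⟨hKS, hKU, heq, hsum⟩
    exact hsplit.1 ⟨hsum, (hindiff hKS hKU).1 heq⟩
  · intro hsol
    obtain ⟨hsum, hprop⟩ := hsplit.2 hsol
    have hKS : 0 < K_S := hsol.1 ▸ by positivity
    have hKU : 0 < K_U := hsol.2 ▸ by positivity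
    exact ⟨hKS, hKU, (hindiff hKS hKU).2 hprop, hsum⟩
end

section
/- Let α ∈ (0,1), κ = α^{1/(1-α)}, and let B, R_0, λ_S, N_m, N_f > 0 and C_U > 0. Define R_M(B_S) = (B − B_S)·R_0/N_m, R_S(B_S) = (κ·λ_S·B_S·R_0 + C_U)/(κ·N_f), and the separate-service revenue S(B_S) = N_m·R_M(B_S)^{1-α} + N_f·R_S(B_S)^{1-α} − (C_U/κ)·R_S(B_S)^{-α} for B_S ∈ [0, B]. Then S is strictly concave on [0, B] and therefore has a unique maximizer B_S^{rev} in [0, B]. -/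
open Real Set

/-!
Both rates are affine in `B_S`, so `S` is a sum of two strictly concave terms `c · (affine)^(1-α)`
minus a convex term `c · (affine)^(-α)`; being continuous and strictly concave on the compact
interval `[0, B]`, it attains its maximum there at exactly one point.
-/

lemma convexOn_rpow_of_nonpos {p : ℝ} (hp : p ≤ 0) :
    ConvexOn ℝ (Ioi 0) fun x : ℝ => x ^ p := by
  have hdiff : DifferentiableOn ℝ (fun x : ℝ => x ^ p) (Ioi 0) := fun x hx =>
    (differentiableAt_rpow_const_of_ne p (ne_of_gt hx)).differentiableWithinAt
  refine MonotoneOn.convexOn_of_deriv (convex_Ioi 0) hdiff.continuousOn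
    (by rwa [interior_Ioi]) ?_
  rw [interior_Ioi, deriv_rpow_const' p]
  intro x hx y hy hxy
  exact mul_le_mul_of_nonpos_left (antitoneOn_rpow_Ioi_of_exponent_nonpos (by linarith) hx hy hxy) hp

section AffineReparametrization

variable {g : ℝ → ℝ} {s t : Set ℝ} {a b c : ℝ}

lemma StrictConcaveOn.const_mul_comp_affine (hg : StrictConcaveOn ℝ t g) (hc : 0 < c)
    (ha : a ≠ 0) (hs : Convex ℝ s) (hst : MapsTo (fun x => a * x + b) s t) :
    StrictConcaveOn ℝ s fun x => c * g (a * x + b) := by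
  refine ⟨hs, fun x hx y hy hxy p q hp hq hpq => ?_⟩
  have hcomb : a * (p • x + q • y) + b = p • (a * x + b) + q • (a * y + b) := by
    simp only [smul_eq_mul]; linear_combination b * hpq.symm
  have := hg.2 (hst hx) (hst hy) (by simpa [ha] using hxy) hp hq hpq
  simp only [smul_eq_mul] at this hcomb ⊢
  rw [hcomb]
  nlinarith

lemma ConvexOn.const_mul_comp_affine (hg : ConvexOn ℝ t g) (hc : 0 ≤ c)
    (hs : Convex ℝ s) (hst : MapsTo (fun x => a * x + b) s t) :
    ConvexOn ℝ s fun x => c * g (a * x + b) := by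
  refine ⟨hs, fun x hx y hy p q hp hq hpq => ?_⟩
  have hcomb : a * (p • x + q • y) + b = p • (a * x + b) + q • (a * y + b) := by
    simp only [smul_eq_mul]; linear_combination b * hpq.symm
  have := hg.2 (hst hx) (hst hy) hp hq hpq
  simp only [smul_eq_mul] at this hcomb ⊢
  rw [hcomb]
  nlinarith

end AffineReparametrization

lemma StrictConcaveOn.existsUnique_isMaxOn {E : Type*} [AddCommGroup E] [Module ℝ E]
    [TopologicalSpace E] {s : Set E} {f : E → ℝ} (hf : StrictConcaveOn ℝ s f)
    (hfc : ContinuousOn f s) (hs : IsCompact s) (hne : s.Nonempty) :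
    ∃! x, x ∈ s ∧ IsMaxOn f s x := by
  obtain ⟨x, hx, hmax⟩ := hs.exists_isMaxOn hne hfc
  exact ⟨x, ⟨hx, hmax⟩, fun y ⟨hy, hymax⟩ => hf.eq_of_isMaxOn hymax hmax hy hx⟩

/-- the separate-service revenue
`S(B_S) = N_m·R_M(B_S)^(1-α) + N_f·R_S(B_S)^(1-α) − (C_U/κ)·R_S(B_S)^(-α)`
is strictly concave on `[0, B]` and therefore has a unique maximizer there. -/
theorem stmt5 (α κ B R_0 lamS N_m N_f C_U : ℝ) (hα0 : 0 < α) (hα1 : α < 1)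
    (hκ : κ = α ^ (1 / (1 - α)))
    (hB : 0 < B) (hR0 : 0 < R_0) (hlamS : 0 < lamS) (hNm : 0 < N_m) (hNf : 0 < N_f)
    (hCU : 0 < C_U) :
    StrictConcaveOn ℝ (Icc 0 B)
      (fun B_S : ℝ =>
        N_m * ((B - B_S) * R_0 / N_m) ^ (1 - α)
          + N_f * ((κ * lamS * B_S * R_0 + C_U) / (κ * N_f)) ^ (1 - α)
          - (C_U / κ) * ((κ * lamS * B_S * R_0 + C_U) / (κ * N_f)) ^ (-α)) ∧
    ∃! x : ℝ, x ∈ Icc 0 B ∧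
      IsMaxOn (fun B_S : ℝ =>
        N_m * ((B - B_S) * R_0 / N_m) ^ (1 - α)
          + N_f * ((κ * lamS * B_S * R_0 + C_U) / (κ * N_f)) ^ (1 - α)
          - (C_U / κ) * ((κ * lamS * B_S * R_0 + C_U) / (κ * N_f)) ^ (-α)) (Icc 0 B) x := by
  have hκ0 : 0 < κ := hκ ▸ by positivity
  have hR_M (x : ℝ) : (B - x) * R_0 / N_m = -(R_0 / N_m) * x + B * R_0 / N_m := by ring
  have hR_S (x : ℝ) : (κ * lamS * x * R_0 + C_U) / (κ * N_f)
      = lamS * R_0 / N_f * x + C_U / (κ * N_f) := by field_simp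
  have hR_M_nonneg : MapsTo (fun x => -(R_0 / N_m) * x + B * R_0 / N_m) (Icc 0 B) (Ici 0) :=
    fun x hx => by have := sub_nonneg.2 hx.2; simp only [mem_Ici, ← hR_M]; positivity
  have hR_S_pos : MapsTo (fun x => lamS * R_0 / N_f * x + C_U / (κ * N_f)) (Icc 0 B) (Ioi 0) :=
    fun x hx => by have := hx.1; simp only [mem_Ioi]; positivity
  have hpow := strictConcaveOn_rpow (p := 1 - α) (by linarith) (by linarith)
  have hmobile : StrictConcaveOn ℝ (Icc 0 B) fun x => N_m * ((B - x) * R_0 / N_m) ^ (1 - α) :=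
    (hpow.const_mul_comp_affine hNm (neg_ne_zero.2 (by positivity)) (convex_Icc 0 B)
      hR_M_nonneg).congr fun x _ => by simp only [hR_M]
  have hfixed : StrictConcaveOn ℝ (Icc 0 B)
      fun x => N_f * ((κ * lamS * x * R_0 + C_U) / (κ * N_f)) ^ (1 - α) :=
    (hpow.const_mul_comp_affine hNf (by positivity) (convex_Icc 0 B)
      (hR_S_pos.mono_right Ioi_subset_Ici_self)).congr fun x _ => by simp only [hR_S]
  have hunlicensed : ConvexOn ℝ (Icc 0 B)
      fun x => C_U / κ * ((κ * lamS * x * R_0 + C_U) / (κ * N_f)) ^ (-α) :=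
    ((convexOn_rpow_of_nonpos (neg_nonpos.2 hα0.le)).const_mul_comp_affine
      (div_pos hCU hκ0).le (convex_Icc 0 B) hR_S_pos).congr fun x _ => by simp only [hR_S]
  have hS := (hmobile.add hfixed).sub_convexOn hunlicensed
  refine ⟨hS, hS.existsUnique_isMaxOn ?_ isCompact_Icc (nonempty_Icc.2 hB.le)⟩
  refine (ContinuousOn.add ?_ ?_).sub ?_ <;>
    refine continuousOn_const.mul (.rpow_const (by fun_prop) fun x hx => ?_)
  · exact .inr (by linarith)
  · exact .inr (by linarith)
  · exact .inl (by rw [hR_S]; exact (hR_S_pos hx).ne')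
end

section
/- Let α ∈ (0,1), κ = α^{1/(1-α)}, and let B, R_0, λ_S, N_m, N_f > 0 and C_U > 0, and let B_S^{rev} be the unique maximizer over [0, B] of the separate-service revenue S(B_S) = N_m·R_M(B_S)^{1-α} + N_f·R_S(B_S)^{1-α} − (C_U/κ)·R_S(B_S)^{-α}, where R_M(B_S) = (B − B_S)R_0/N_m and R_S(B_S) = (κλ_S B_S R_0 + C_U)/(κN_f). Then B_S^{rev} > 0 if and only if C_U < C_U^{rev}, where C_U^{rev} = (κ·N_f·B·R_0/N_m)·(λ_S/(1−α))^{1/α}; equivalently B_S^{rev} = 0 if and only if C_U ≥ C_U^{rev}. -/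
/-!
The derivative `S'` of the revenue combines, with positive coefficients, negative powers of the
increasing rate `R_S` and, with a minus sign, a negative power of the decreasing rate `R_M`; so
`S' ≤ S'(0)` on `[0, B)`. Hence `0` maximises `S` on `[0, B]` iff `S'(0) ≤ 0`, and by uniqueness
of the maximiser this is exactly when `B_S^rev = 0`. At `0` the two `R_S` terms of `S'` merge into
`λ_S R_S(0)^{-α}`, and `λ_S R_S(0)^{-α} ≤ (1-α) R_M(0)^{-α}` unwinds to `C_U^rev ≤ C_U`.
-/

open Real Set

theorem isMaxOn_Icc_left_iff_of_deriv_le {f f' : ℝ → ℝ} {a b : ℝ} (hab : a < b)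
    (hf : ContinuousOn f (Icc a b)) (hderiv : ∀ x ∈ Ico a b, HasDerivAt f (f' x) x)
    (hle : ∀ x ∈ Ioo a b, f' x ≤ f' a) :
    IsMaxOn f (Icc a b) a ↔ f' a ≤ 0 := by
  constructor
  · intro hmax
    have hcone : b - a ∈ posTangentConeAt (Icc a b) a :=
      sub_mem_posTangentConeAt_of_segment_subset (segment_eq_Icc hab.le).subset
    have h := hmax.localize.hasFDerivWithinAt_nonpos
      (hderiv a ⟨le_rfl, hab⟩).hasDerivWithinAt hcone
    simp only [ContinuousLinearMap.toSpanSingleton_apply, smul_eq_mul] at h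
    exact nonpos_of_mul_nonpos_right h (sub_pos.2 hab)
  · intro hnonpos
    have hanti : AntitoneOn f (Icc a b) := by
      refine antitoneOn_of_deriv_nonpos (convex_Icc a b) hf (fun x hx => ?_) (fun x hx => ?_)
        <;> rw [interior_Icc] at hx
      · exact (hderiv x (Ioo_subset_Ico_self hx)).differentiableAt.differentiableWithinAt
      · rw [(hderiv x (Ioo_subset_Ico_self hx)).deriv]
        exact (hle x hx).trans hnonpos
    exact fun x hx => hanti (left_mem_Icc.2 hab.le) hx hx.1

theorem mul_rpow_neg_le_mul_rpow_neg_iff {a b c m α : ℝ} (ha : 0 < a) (hb : 0 < b) (hc : 0 < c)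
    (hm : 0 < m) (hα : 0 < α) :
    a * c ^ (-α) ≤ b * m ^ (-α) ↔ m * (a / b) ^ (1 / α) ≤ c := by
  rw [rpow_neg hc.le, rpow_neg hm.le, ← div_eq_mul_inv, ← div_eq_mul_inv,
    div_le_div_iff₀ (by positivity) (by positivity), ← le_div_iff₀' hm, one_div,
    rpow_inv_le_iff_of_pos (by positivity) (by positivity) hα, div_rpow hc.le hm.le,
    div_le_div_iff₀ hb (by positivity), mul_comm b]

noncomputable section

namespace SeparateService

variable (α κ B R_0 lamS N_m N_f C_U : ℝ)

def macroRate (x : ℝ) : ℝ := (B - x) * R_0 / N_m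

def smallCellRate (x : ℝ) : ℝ := (κ * lamS * x * R_0 + C_U) / (κ * N_f)

def revenue (x : ℝ) : ℝ :=
  N_m * macroRate B R_0 N_m x ^ (1 - α) + N_f * smallCellRate κ R_0 lamS N_f C_U x ^ (1 - α)
    - (C_U / κ) * smallCellRate κ R_0 lamS N_f C_U x ^ (-α)

def revenueDeriv (x : ℝ) : ℝ :=
  R_0 * (lamS * ((1 - α) * smallCellRate κ R_0 lamS N_f C_U x ^ (-α)
      + α * (C_U / (κ * N_f)) * smallCellRate κ R_0 lamS N_f C_U x ^ (-α - 1))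
    - (1 - α) * macroRate B R_0 N_m x ^ (-α))

variable {α κ B R_0 lamS N_m N_f C_U}

lemma smallCellRate_zero : smallCellRate κ R_0 lamS N_f C_U 0 = C_U / (κ * N_f) := by
  simp [smallCellRate]

lemma smallCellRate_pos (hκ : 0 < κ) (hR0 : 0 < R_0) (hlamS : 0 < lamS) (hNf : 0 < N_f)
    (hCU : 0 < C_U) {x : ℝ} (hx : 0 ≤ x) : 0 < smallCellRate κ R_0 lamS N_f C_U x := by
  unfold smallCellRate; positivity

lemma smallCellRate_mono (hκ : 0 < κ) (hR0 : 0 < R_0) (hlamS : 0 < lamS) (hNf : 0 < N_f) :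
    Monotone (smallCellRate κ R_0 lamS N_f C_U) := fun x y hxy => by
  unfold smallCellRate; gcongr

lemma macroRate_anti (hR0 : 0 < R_0) (hNm : 0 < N_m) : Antitone (macroRate B R_0 N_m) :=
  fun x y hxy => by unfold macroRate; gcongr

lemma hasDerivAt_macroRate (x : ℝ) :
    HasDerivAt (macroRate B R_0 N_m) (-(R_0 / N_m)) x := by
  have h := ((hasDerivAt_id x).const_sub B).mul_const R_0 |>.div_const N_m
  exact h.congr_deriv (by ring)

lemma hasDerivAt_smallCellRate (hκ : κ ≠ 0) (x : ℝ) :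
    HasDerivAt (smallCellRate κ R_0 lamS N_f C_U) (lamS * R_0 / N_f) x := by
  have h := (((hasDerivAt_id x).const_mul (κ * lamS)).mul_const R_0).add_const C_U
    |>.div_const (κ * N_f)
  exact h.congr_deriv (by field_simp)

lemma hasDerivAt_revenue (hκ : 0 < κ) (hR0 : 0 < R_0) (hlamS : 0 < lamS) (hNm : 0 < N_m)
    (hNf : 0 < N_f) (hCU : 0 < C_U) {x : ℝ} (hx0 : 0 ≤ x) (hxB : x < B) :
    HasDerivAt (revenue α κ B R_0 lamS N_m N_f C_U)
      (revenueDeriv α κ B R_0 lamS N_m N_f C_U x) x := by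
  have hM : macroRate B R_0 N_m x ≠ 0 := by
    unfold macroRate; have := sub_pos.2 hxB; positivity
  have hS := (smallCellRate_pos hκ hR0 hlamS hNf hCU hx0).ne'
  have hSd : HasDerivAt (smallCellRate κ R_0 lamS N_f C_U) _ x :=
    hasDerivAt_smallCellRate hκ.ne' x
  have h := ((((hasDerivAt_macroRate x).rpow_const (p := 1 - α) (.inl hM)).const_mul N_m).add
    ((hSd.rpow_const (p := 1 - α) (.inl hS)).const_mul N_f)).sub
    ((hSd.rpow_const (p := -α) (.inl hS)).const_mul (C_U / κ))
  refine h.congr_deriv ?_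
  rw [revenueDeriv, show 1 - α - 1 = -α by ring]
  field_simp
  ring

lemma continuousOn_revenue (hα1 : α < 1) (hκ : 0 < κ) (hR0 : 0 < R_0) (hlamS : 0 < lamS)
    (hNf : 0 < N_f) (hCU : 0 < C_U) :
    ContinuousOn (revenue α κ B R_0 lamS N_m N_f C_U) (Ici 0) := by
  have hS : ∀ x ∈ Ici (0 : ℝ), smallCellRate κ R_0 lamS N_f C_U x ≠ 0 := fun x hx =>
    (smallCellRate_pos hκ hR0 hlamS hNf hCU hx).ne'
  have hSc : Continuous (smallCellRate κ R_0 lamS N_f C_U) := by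
    unfold smallCellRate; fun_prop
  have hMc : Continuous (macroRate B R_0 N_m) := by
    unfold macroRate; fun_prop
  unfold revenue
  refine ((continuousOn_const.mul (hMc.continuousOn.rpow_const fun _ _ => .inr ?_)).add
    (continuousOn_const.mul (hSc.continuousOn.rpow_const fun x hx => .inl (hS x hx)))).sub
    (continuousOn_const.mul (hSc.continuousOn.rpow_const fun x hx => .inl (hS x hx)))
  linarith

lemma revenueDeriv_le_revenueDeriv_zero (hα0 : 0 < α) (hα1 : α < 1) (hκ : 0 < κ)
    (hR0 : 0 < R_0) (hlamS : 0 < lamS) (hNm : 0 < N_m) (hNf : 0 < N_f) (hCU : 0 < C_U)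
    {x : ℝ} (hx0 : 0 ≤ x) (hxB : x < B) :
    revenueDeriv α κ B R_0 lamS N_m N_f C_U x ≤ revenueDeriv α κ B R_0 lamS N_m N_f C_U 0 := by
  have hS0 := smallCellRate_pos hκ hR0 hlamS hNf hCU le_rfl
  have hS := smallCellRate_mono (C_U := C_U) hκ hR0 hlamS hNf hx0
  have hMx : 0 < macroRate B R_0 N_m x := by
    unfold macroRate; have := sub_pos.2 hxB; positivity
  have hM := macroRate_anti (B := B) hR0 hNm hx0
  have h1α : 0 ≤ 1 - α := by linarith
  unfold revenueDeriv
  gcongr R_0 * (lamS * ((1 - α) * ?_ + α * (C_U / (κ * N_f)) * ?_) - (1 - α) * ?_)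
  · exact rpow_le_rpow_of_nonpos hS0 hS (by linarith)
  · exact rpow_le_rpow_of_nonpos hS0 hS (by linarith)
  · exact rpow_le_rpow_of_nonpos hMx hM (by linarith)

lemma revenueDeriv_zero_nonpos_iff (hα0 : 0 < α) (hα1 : α < 1) (hκ : 0 < κ) (hB : 0 < B)
    (hR0 : 0 < R_0) (hlamS : 0 < lamS) (hNm : 0 < N_m) (hNf : 0 < N_f) (hCU : 0 < C_U) :
    revenueDeriv α κ B R_0 lamS N_m N_f C_U 0 ≤ 0 ↔
      κ * N_f * B * R_0 / N_m * (lamS / (1 - α)) ^ (1 / α) ≤ C_U := by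
  have hc : 0 < C_U / (κ * N_f) := by positivity
  have hsimp : revenueDeriv α κ B R_0 lamS N_m N_f C_U 0
      = R_0 * (lamS * (C_U / (κ * N_f)) ^ (-α) - (1 - α) * (B * R_0 / N_m) ^ (-α)) := by
    rw [revenueDeriv, smallCellRate_zero, macroRate, sub_zero, rpow_sub_one hc.ne']
    field_simp
    ring
  rw [hsimp, ← not_lt, mul_pos_iff_of_pos_left hR0, not_lt, sub_nonpos,
    mul_rpow_neg_le_mul_rpow_neg_iff hlamS (by linarith) hc (by positivity) hα0,
    le_div_iff₀ (by positivity)]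
  ring_nf

end SeparateService

end

open SeparateService

/-- the revenue-optimal small-cell bandwidth `B_S^rev` is positive iff
`C_U < C_U^rev = (κ·N_f·B·R_0/N_m)·(λ_S/(1−α))^(1/α)`; equivalently it is zero iff
`C_U ≥ C_U^rev`. -/
theorem stmt6 (α κ B R_0 lamS N_m N_f C_U Brev : ℝ) (hα0 : 0 < α) (hα1 : α < 1)
    (hκ : κ = α ^ (1 / (1 - α)))
    (hB : 0 < B) (hR0 : 0 < R_0) (hlamS : 0 < lamS) (hNm : 0 < N_m) (hNf : 0 < N_f)
    (hCU : 0 < C_U)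
    (hmem : Brev ∈ Icc (0 : ℝ) B)
    (hmax : IsMaxOn (fun B_S : ℝ =>
        N_m * ((B - B_S) * R_0 / N_m) ^ (1 - α)
          + N_f * ((κ * lamS * B_S * R_0 + C_U) / (κ * N_f)) ^ (1 - α)
          - (C_U / κ) * ((κ * lamS * B_S * R_0 + C_U) / (κ * N_f)) ^ (-α)) (Icc 0 B) Brev)
    (huniq : ∀ x ∈ Icc (0 : ℝ) B,
      IsMaxOn (fun B_S : ℝ =>
        N_m * ((B - B_S) * R_0 / N_m) ^ (1 - α)
          + N_f * ((κ * lamS * B_S * R_0 + C_U) / (κ * N_f)) ^ (1 - α)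
          - (C_U / κ) * ((κ * lamS * B_S * R_0 + C_U) / (κ * N_f)) ^ (-α)) (Icc 0 B) x →
      x = Brev) :
    (0 < Brev ↔ C_U < κ * N_f * B * R_0 / N_m * (lamS / (1 - α)) ^ (1 / α)) ∧
    (Brev = 0 ↔ κ * N_f * B * R_0 / N_m * (lamS / (1 - α)) ^ (1 / α) ≤ C_U) := by
  have hκ0 : 0 < κ := hκ ▸ by positivity
  have hzero_iff : Brev = 0 ↔ κ * N_f * B * R_0 / N_m * (lamS / (1 - α)) ^ (1 / α) ≤ C_U :=
    calc Brev = 0 ↔ IsMaxOn (revenue α κ B R_0 lamS N_m N_f C_U) (Icc 0 B) 0 :=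
          ⟨fun h => h ▸ hmax, fun h => (huniq 0 ⟨le_rfl, hB.le⟩ h).symm⟩
      _ ↔ revenueDeriv α κ B R_0 lamS N_m N_f C_U 0 ≤ 0 :=
          isMaxOn_Icc_left_iff_of_deriv_le hB
            ((continuousOn_revenue hα1 hκ0 hR0 hlamS hNf hCU).mono Icc_subset_Ici_self)
            (fun x hx => hasDerivAt_revenue hκ0 hR0 hlamS hNm hNf hCU hx.1 hx.2)
            (fun x hx => revenueDeriv_le_revenueDeriv_zero hα0 hα1 hκ0 hR0 hlamS hNm hNf hCU
              hx.1.le hx.2)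
      _ ↔ _ := revenueDeriv_zero_nonpos_iff hα0 hα1 hκ0 hB hR0 hlamS hNm hNf hCU
  refine ⟨?_, hzero_iff⟩
  rw [hmem.1.lt_iff_ne', ← not_le]
  exact hzero_iff.not
end

section
/- For every α ∈ (0,1), the equation (1−α)·(1+β)^{1+α} − β = 1−α has exactly one solution β* in (0, ∞). -/
/-!
The function `β ↦ (1 - α) (1 + β) ^ (1 + α) - β` is strictly convex on `[0, ∞)` and takes the
value `1 - α` at `β = 0`, so it takes that value at most once more. It does take it again: its
slope at `0` is `(1 - α) (1 + α) - 1 = -α ^ 2 < 0` (made quantitative by Bernoulli's inequality),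
while it grows superlinearly, so the intermediate value theorem applies.
-/

open Real Set

theorem StrictConvexOn.const_mul {𝕜 E : Type*} [Field 𝕜] [LinearOrder 𝕜] [IsStrictOrderedRing 𝕜]
    [AddCommMonoid E] [Module 𝕜 E] {s : Set E} {f : E → 𝕜} {c : 𝕜} (hc : 0 < c)
    (hf : StrictConvexOn 𝕜 s f) : StrictConvexOn 𝕜 s fun x => c * f x :=
  ⟨hf.1, fun x hx y hy hxy a b ha hb hab =>
    calc c * f (a • x + b • y) < c * (a • f x + b • f y) :=
          mul_lt_mul_of_pos_left (hf.2 hx hy hxy ha hb hab) hc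
      _ = a • (c * f x) + b • (c * f y) := by simp only [smul_eq_mul]; ring⟩

theorem StrictConvexOn.eq_of_apply_eq_apply {𝕜 : Type*} [Field 𝕜] [LinearOrder 𝕜]
    [IsStrictOrderedRing 𝕜] {s : Set 𝕜} {f : 𝕜 → 𝕜} (hf : StrictConvexOn 𝕜 s f) {a x y : 𝕜}
    (ha : a ∈ s) (hx : x ∈ s) (hy : y ∈ s) (hxa : x ≠ a) (hya : y ≠ a) (hfx : f x = f a)
    (hfy : f y = f a) : x = y := by
  by_contra hxy
  rcases lt_or_gt_of_ne hxy with hxy | hyx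
  · simpa [hfx, hfy] using hf.secant_strict_mono ha hx hy hxa hya hxy
  · simpa [hfx, hfy] using hf.secant_strict_mono ha hy hx hya hxa hyx

noncomputable def equationLHS (α β : ℝ) : ℝ := (1 - α) * (1 + β) ^ (1 + α) - β

variable {α : ℝ}

@[simp]
theorem equationLHS_zero : equationLHS α 0 = 1 - α := by
  simp [equationLHS]

theorem continuousOn_equationLHS : ContinuousOn (equationLHS α) (Ioi (-1)) := by
  unfold equationLHS
  refine ContinuousOn.sub (continuousOn_const.mul ?_) continuousOn_id
  exact ContinuousOn.rpow_const (continuousOn_const.add continuousOn_id)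
    fun β hβ => Or.inl (by simp only [mem_Ioi] at hβ; linarith)

theorem strictConvexOn_equationLHS (hα0 : 0 < α) (hα1 : α < 1) :
    StrictConvexOn ℝ (Ici 0) (equationLHS α) := by
  have hpow : StrictConvexOn ℝ (Ici 0) fun β : ℝ => (1 + β) ^ (1 + α) := by
    refine ((strictConvexOn_rpow (by linarith)).translate_right 1).subset ?_ (convex_Ici 0)
    intro β (hβ : 0 ≤ β)
    simp only [mem_preimage, mem_Ici]
    linarith
  exact (hpow.const_mul (by linarith)).sub_concaveOn (concaveOn_id (convex_Ici 0))

theorem equationLHS_lt_of_mul_lt (hα0 : 0 < α) (hα1 : α < 1) {β : ℝ} (hβ : 0 < β)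
    (hβα : (1 - α) * β < α) : equationLHS α β < 1 - α := by
  have hbern : (1 + β) ^ α ≤ 1 + α * β :=
    rpow_one_add_le_one_add_mul_self (by linarith) hα0.le hα1.le
  have hsplit : (1 + β) ^ (1 + α) = (1 + β) * (1 + β) ^ α := by
    rw [rpow_add (by linarith), rpow_one]
  calc equationLHS α β
      ≤ (1 - α) * ((1 + β) * (1 + α * β)) - β := by
        rw [equationLHS, hsplit]
        gcongr
    _ = 1 - α + α * β * ((1 - α) * β - α) := by ring
    _ < 1 - α := by
        have : α * β * ((1 - α) * β - α) < 0 :=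
          mul_neg_of_pos_of_neg (mul_pos hα0 hβ) (by linarith)
        linarith

theorem exists_equationLHS_lt (hα0 : 0 < α) (hα1 : α < 1) :
    ∃ β > 0, equationLHS α β < 1 - α := by
  have h1α : 0 < 1 - α := by linarith
  refine ⟨α / (2 * (1 - α)), by positivity, equationLHS_lt_of_mul_lt hα0 hα1 (by positivity) ?_⟩
  rw [show (1 - α) * (α / (2 * (1 - α))) = α / 2 by field_simp]
  linarith

theorem exists_lt_equationLHS (hα0 : 0 < α) (hα1 : α < 1) :
    ∃ β > 0, 1 - α < equationLHS α β := by
  have h1α : 0 < 1 - α := by linarith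
  have htwo : 1 < 2 / (1 - α) := by rw [lt_div_iff₀ h1α]; linarith
  set γ := (2 / (1 - α)) ^ α⁻¹
  have hγ : 1 < γ := one_lt_rpow htwo (inv_pos.2 hα0)
  have hγα : γ ^ α = 2 / (1 - α) := rpow_inv_rpow (by positivity) hα0.ne'
  refine ⟨γ - 1, by linarith, ?_⟩
  -- at `β = γ - 1` the factor `(1 + β) ^ α` equals `2 / (1 - α)`, so the value is `2 + β`
  have : equationLHS α (γ - 1) = γ + 1 := by
    rw [equationLHS, add_sub_cancel, rpow_add (by linarith), rpow_one, hγα]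
    field_simp
    ring
  rw [this]
  linarith

/-- for every α ∈ (0,1), the equation `(1−α)·(1+β)^(1+α) − β = 1−α`
has exactly one solution `β*` in `(0, ∞)`. -/
theorem stmt8 (α : ℝ) (hα0 : 0 < α) (hα1 : α < 1) :
    ∃! β : ℝ, 0 < β ∧ (1 - α) * (1 + β) ^ (1 + α) - β = 1 - α := by
  obtain ⟨a, ha, hfa⟩ := exists_equationLHS_lt hα0 hα1
  obtain ⟨b, hb, hfb⟩ := exists_lt_equationLHS hα0 hα1
  have hpos : uIcc a b ⊆ Ioi 0 := fun β hβ => lt_of_lt_of_le (lt_min ha hb) hβ.1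
  obtain ⟨β, hβ, hβroot⟩ := intermediate_value_uIcc
    (continuousOn_equationLHS.mono (hpos.trans (Ioi_subset_Ioi (by norm_num))))
    (mem_uIcc_of_le hfa.le hfb.le)
  have hβ0 : 0 < β := hpos hβ
  refine ⟨β, ⟨hβ0, hβroot⟩, fun y ⟨hy, hyroot⟩ => ?_⟩
  exact (strictConvexOn_equationLHS hα0 hα1).eq_of_apply_eq_apply self_mem_Ici hy.le hβ0.le
    hy.ne' hβ0.ne' (equationLHS_zero.symm ▸ hyroot) (equationLHS_zero.symm ▸ hβroot)
end

section
/- Let α ∈ (0,1) and a > 0, and let β* be the unique strictly positive solution of (1−α)(1+β)^{1+α} − β = 1−α. Define M(C) = (1−α)·((a+C)^{1+α} − a^{1+α}) − C·a^{α} for C ≥ 0. Then M(0) = 0, M(C) < 0 for 0 < C < β*·a, and M(C) > 0 for C > β*·a; in particular C = β*·a is the unique strictly positive zero of M. -/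
/-!
By homogeneity, `M(C) = a^(1+α) · (g(C/a) - g 0)` with `g β = (1-α)(1+β)^(1+α) - β`, and `g` is
strictly convex on `[0, ∞)` since `1 + α > 1` and `1 - α > 0`. A strictly convex function taking
the same value at `0` and `β*` lies strictly below it on `(0, β*)` and strictly above it beyond
`β*`; the sign pattern of `M` follows, and with it the uniqueness of its positive zero.
-/

open Real Set

theorem StrictConvexOn.lt_of_mem_Ioo_of_eq {s : Set ℝ} {f : ℝ → ℝ} (hf : StrictConvexOn ℝ s f)
    {x y z : ℝ} (hx : x ∈ s) (hy : y ∈ s) (hfxy : f x = f y) (hz : z ∈ Ioo x y) : f z < f x := by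
  have hxy : x < y := hz.1.trans hz.2
  have := hf.lt_on_openSegment hx hy hxy.ne (by rwa [openSegment_eq_Ioo hxy])
  rwa [← hfxy, max_self] at this

theorem StrictConvexOn.lt_of_eq_of_lt {s : Set ℝ} {f : ℝ → ℝ} (hf : StrictConvexOn ℝ s f)
    {x y z : ℝ} (hx : x ∈ s) (hz : z ∈ s) (hxy : x < y) (hfxy : f x = f y) (hyz : y < z) :
    f y < f z := by
  have := hf.lt_on_openSegment hx hz (hxy.trans hyz).ne
    (by rw [openSegment_eq_Ioo (hxy.trans hyz)]; exact ⟨hxy, hyz⟩)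
  rw [hfxy, lt_max_iff] at this
  exact this.resolve_left (lt_irrefl _)

theorem strictConvexOn_one_sub_mul_one_add_rpow_sub {α : ℝ} (hα0 : 0 < α) (hα1 : α < 1) :
    StrictConvexOn ℝ (Ici 0) fun β : ℝ ↦ (1 - α) * (1 + β) ^ (1 + α) - β := by
  refine ⟨convex_Ici 0, fun x hx y hy hxy s t hs ht hst ↦ ?_⟩
  have hpow := (strictConvexOn_rpow (show (1 : ℝ) < 1 + α by linarith)).2
    (show 1 + x ∈ Ici (0 : ℝ) from mem_Ici.2 (by linarith [mem_Ici.1 hx]))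
    (show 1 + y ∈ Ici (0 : ℝ) from mem_Ici.2 (by linarith [mem_Ici.1 hy]))
    (by simpa using hxy) hs ht hst
  have hcomb : s • (1 + x) + t • (1 + y) = 1 + (s • x + t • y) := by
    simp only [smul_eq_mul]; linear_combination hst
  rw [hcomb] at hpow
  simp only [smul_eq_mul] at hpow ⊢
  linarith [mul_lt_mul_of_pos_left hpow (show 0 < 1 - α by linarith)]

theorem one_sub_mul_rpow_sub_eq_rpow_mul {α a C : ℝ} (ha : 0 < a) (haC : 0 ≤ a + C) :
    (1 - α) * ((a + C) ^ (1 + α) - a ^ (1 + α)) - C * a ^ α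
      = a ^ (1 + α) * ((1 - α) * (1 + C / a) ^ (1 + α) - C / a - (1 - α)) := by
  have hsplit : (a + C) ^ (1 + α) = a ^ (1 + α) * (1 + C / a) ^ (1 + α) := by
    have hCa : 0 ≤ 1 + C / a := by rw [one_add_div ha.ne']; exact div_nonneg haC ha.le
    rw [← mul_rpow ha.le hCa, mul_one_add, mul_div_cancel₀ _ ha.ne']
  have hlin : a ^ (1 + α) * (C / a) = C * a ^ α := by
    rw [rpow_add ha, rpow_one]; field_simp
  rw [hsplit, ← hlin]; ring

theorem stmt9_general (α a βs : ℝ) (hα0 : 0 < α) (hα1 : α < 1) (ha : 0 < a)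
    (hβs : 0 < βs) (hroot : (1 - α) * (1 + βs) ^ (1 + α) - βs = 1 - α) :
    ((1 - α) * ((a + 0) ^ (1 + α) - a ^ (1 + α)) - 0 * a ^ α = 0) ∧
    (∀ C : ℝ, 0 < C → C < βs * a →
      (1 - α) * ((a + C) ^ (1 + α) - a ^ (1 + α)) - C * a ^ α < 0) ∧
    (∀ C : ℝ, βs * a < C →
      0 < (1 - α) * ((a + C) ^ (1 + α) - a ^ (1 + α)) - C * a ^ α) ∧
    (∀ C : ℝ, 0 < C →
      (1 - α) * ((a + C) ^ (1 + α) - a ^ (1 + α)) - C * a ^ α = 0 → C = βs * a) := by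
  have hg := strictConvexOn_one_sub_mul_one_add_rpow_sub hα0 hα1
  have hg0 : (1 - α) * (1 + 0) ^ (1 + α) - 0 = (1 - α) * (1 + βs) ^ (1 + α) - βs := by simp [hroot]
  have hpa : 0 < a ^ (1 + α) := rpow_pos_of_pos ha _
  have hneg : ∀ C : ℝ, 0 < C → C < βs * a →
      (1 - α) * ((a + C) ^ (1 + α) - a ^ (1 + α)) - C * a ^ α < 0 := by
    intro C hC hCa
    rw [one_sub_mul_rpow_sub_eq_rpow_mul ha (by linarith)]
    have := hg.lt_of_mem_Ioo_of_eq self_mem_Ici hβs.le hg0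
      ⟨div_pos hC ha, (div_lt_iff₀ ha).2 hCa⟩
    simp only [add_zero, one_rpow, mul_one, sub_zero] at this
    exact mul_neg_of_pos_of_neg hpa (by linarith)
  have hpos : ∀ C : ℝ, βs * a < C →
      0 < (1 - α) * ((a + C) ^ (1 + α) - a ^ (1 + α)) - C * a ^ α := by
    intro C hCa
    have hC : 0 < C := (mul_pos hβs ha).trans hCa
    rw [one_sub_mul_rpow_sub_eq_rpow_mul ha (by linarith)]
    have := hg.lt_of_eq_of_lt self_mem_Ici (div_pos hC ha).le hβs hg0 ((lt_div_iff₀ ha).2 hCa)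
    exact mul_pos hpa (by linarith)
  refine ⟨by simp, hneg, hpos, fun C hC hM ↦ ?_⟩
  rcases lt_trichotomy C (βs * a) with hlt | heq | hgt
  · exact absurd hM (hneg C hC hlt).ne
  · exact heq
  · exact absurd hM (hpos C hgt).ne'

/-- with `β*` the unique strictly positive solution of
`(1−α)(1+β)^(1+α) − β = 1−α` and `M(C) = (1−α)·((a+C)^(1+α) − a^(1+α)) − C·a^α`,
we have `M(0) = 0`, `M(C) < 0` for `0 < C < β*·a`, and `M(C) > 0` for `C > β*·a`;
in particular `C = β*·a` is the unique strictly positive zero of `M`. -/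
theorem stmt9 (α a βs : ℝ) (hα0 : 0 < α) (hα1 : α < 1) (ha : 0 < a)
    (hβs : 0 < βs) (hroot : (1 - α) * (1 + βs) ^ (1 + α) - βs = 1 - α)
    (huniq : ∀ β : ℝ, 0 < β → (1 - α) * (1 + β) ^ (1 + α) - β = 1 - α → β = βs) :
    ((1 - α) * ((a + 0) ^ (1 + α) - a ^ (1 + α)) - 0 * a ^ α = 0) ∧
    (∀ C : ℝ, 0 < C → C < βs * a →
      (1 - α) * ((a + C) ^ (1 + α) - a ^ (1 + α)) - C * a ^ α < 0) ∧
    (∀ C : ℝ, βs * a < C →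
      0 < (1 - α) * ((a + C) ^ (1 + α) - a ^ (1 + α)) - C * a ^ α) ∧
    (∀ C : ℝ, 0 < C →
      (1 - α) * ((a + C) ^ (1 + α) - a ^ (1 + α)) - C * a ^ α = 0 → C = βs * a) :=
  stmt9_general α a βs hα0 hα1 ha hβs hroot
end

section
/- Let α ∈ (0,1), κ = α^{1/(1-α)}, and let B, R_0, λ_S, N_m, N_f > 0. For C_U ≥ 0 let S(B_S; C_U) = N_m·((B−B_S)R_0/N_m)^{1-α} + N_f·R_S^{1-α} − (C_U/κ)·R_S^{-α} with R_S = (κλ_S B_S R_0 + C_U)/(κN_f). Then for every C_U > 0, the maximum of S(·; C_U) over [0, B] is strictly less than the maximum of S(·; 0) over [0, B]; i.e., the monopolist's optimal revenue with unlicensed spectrum is always strictly less than without it. -/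
/-!
Writing `R` for the small-cell rate, the small-cell revenue `N_f R^{1-α} - (C_U/κ) R^{-α}`
simplifies to `λ_S b R_0 R^{-α}`. Since `R` grows with `C_U`, unlicensed spectrum strictly lowers
the revenue at every `b > 0` and leaves it unchanged at `b = 0`. Without unlicensed spectrum,
`b = 0` is not optimal: moving bandwidth `b` to small cells loses `O(b)` on macro cells but gains a
multiple of `b^{1-α}`. Hence the optimum with `C_U > 0`, wherever it lies, is beaten by some
allocation without unlicensed spectrum.
-/

open Real Set Filter Topology

lemma Real.rpow_one_sub_eq_mul_rpow_neg {x α : ℝ} (hx : 0 ≤ x) (hα : α ≠ 1) :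
    x ^ (1 - α) = x * x ^ (-α) := by
  rw [sub_eq_add_neg, rpow_one_add' hx (by rwa [← sub_eq_add_neg, sub_ne_zero, ne_comm])]

lemma Real.rpow_one_sub_sub_rpow_one_sub_le {x y α : ℝ} (hα : 0 ≤ α) (hy : 0 < y) (hyx : y ≤ x) :
    x ^ (1 - α) - y ^ (1 - α) ≤ (x - y) * y ^ (-α) := by
  have hx : 0 < x := hy.trans_le hyx
  have hxy : x ^ (-α) ≤ y ^ (-α) := rpow_le_rpow_of_nonpos hy hyx (neg_nonpos.2 hα)
  rw [sub_eq_add_neg 1 α, rpow_add hx, rpow_add hy, rpow_one, rpow_one]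
  nlinarith

lemma exists_mem_Ioc_mul_lt_mul_rpow {α K K' δ : ℝ} (hα : 0 < α) (hK' : 0 < K') (hδ : 0 < δ) :
    ∃ b ∈ Ioc 0 δ, K * b < K' * b ^ (1 - α) := by
  have hlim : Tendsto (fun b : ℝ => K * b ^ α) (𝓝[>] 0) (𝓝 0) := by
    have := ((continuousAt_rpow_const 0 α (Or.inr hα.le)).tendsto.const_mul K).mono_left
      (nhdsWithin_le_nhds (s := Ioi 0))
    simpa [zero_rpow hα.ne'] using this
  obtain ⟨b, hbδ, hb⟩ :=
    (Filter.Eventually.and (Ioc_mem_nhdsGT hδ) (hlim.eventually (gt_mem_nhds hK'))).exists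
  refine ⟨b, hbδ, ?_⟩
  have hsplit : b = b ^ α * b ^ (1 - α) := by
    rw [← rpow_add hbδ.1, add_sub_cancel, rpow_one]
  calc K * b = K * b ^ α * b ^ (1 - α) := by rw [mul_assoc, ← hsplit]
    _ < K' * b ^ (1 - α) := mul_lt_mul_of_pos_right hb (rpow_pos_of_pos hbδ.1 _)

noncomputable def separateServiceRevenue (α κ B R_0 lamS N_m N_f C : ℝ) (b : ℝ) : ℝ :=
  N_m * ((B - b) * R_0 / N_m) ^ (1 - α)
    + N_f * ((κ * lamS * b * R_0 + C) / (κ * N_f)) ^ (1 - α)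
    - (C / κ) * ((κ * lamS * b * R_0 + C) / (κ * N_f)) ^ (-α)

namespace separateServiceRevenue

variable {α κ B R_0 lamS N_m N_f C b : ℝ}

lemma eq_add_mul_rpow_neg (hα : α ≠ 1) (hκ : κ ≠ 0) (hNf : N_f ≠ 0)
    (hR : 0 ≤ (κ * lamS * b * R_0 + C) / (κ * N_f)) :
    separateServiceRevenue α κ B R_0 lamS N_m N_f C b
      = N_m * ((B - b) * R_0 / N_m) ^ (1 - α)
        + lamS * b * R_0 * ((κ * lamS * b * R_0 + C) / (κ * N_f)) ^ (-α) := by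
  have hsmall : N_f * ((κ * lamS * b * R_0 + C) / (κ * N_f)) - C / κ = lamS * b * R_0 := by
    field_simp
    ring
  rw [separateServiceRevenue, rpow_one_sub_eq_mul_rpow_neg hR hα, ← hsmall]
  ring

lemma zero_apply (hκ : κ ≠ 0) (hNf : 0 < N_f) (hlamS : 0 < lamS) (hR0 : 0 < R_0)
    (hb : 0 ≤ b) :
    separateServiceRevenue α κ B R_0 lamS N_m N_f 0 b
      = N_m * ((B - b) * R_0 / N_m) ^ (1 - α)
        + N_f * (lamS * R_0 / N_f) ^ (1 - α) * b ^ (1 - α) := by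
  have hrate : (κ * lamS * b * R_0 + 0) / (κ * N_f) = lamS * R_0 / N_f * b := by
    field_simp
    ring
  rw [separateServiceRevenue, hrate, mul_rpow (by positivity) hb]
  ring

lemma apply_zero (hα : α < 1) (hκ : 0 < κ) (hNf : 0 < N_f) (hC : 0 ≤ C) :
    separateServiceRevenue α κ B R_0 lamS N_m N_f C 0
      = separateServiceRevenue α κ B R_0 lamS N_m N_f 0 0 := by
  rw [eq_add_mul_rpow_neg hα.ne hκ.ne' hNf.ne' (by rw [mul_zero, zero_mul, zero_add]; positivity),
    eq_add_mul_rpow_neg hα.ne hκ.ne' hNf.ne' (by simp)]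
  simp

lemma lt_zero_apply (hα : 0 < α) (hα1 : α < 1) (hκ : 0 < κ) (hNf : 0 < N_f)
    (hlamS : 0 < lamS) (hR0 : 0 < R_0) (hC : 0 < C) (hb : 0 < b) :
    separateServiceRevenue α κ B R_0 lamS N_m N_f C b
      < separateServiceRevenue α κ B R_0 lamS N_m N_f 0 b := by
  have hrate : (κ * lamS * b * R_0 + 0) / (κ * N_f) < (κ * lamS * b * R_0 + C) / (κ * N_f) := by
    gcongr
  rw [eq_add_mul_rpow_neg hα1.ne hκ.ne' hNf.ne' (by positivity),
    eq_add_mul_rpow_neg hα1.ne hκ.ne' hNf.ne' (by positivity)]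
  gcongr ?_ + ?_
  exact mul_lt_mul_of_pos_left (rpow_lt_rpow_of_neg (by positivity) hrate (neg_neg_of_pos hα))
    (by positivity)

lemma exists_zero_apply_gt (hα : 0 < α) (hα1 : α < 1) (hκ : κ ≠ 0) (hB : 0 < B) (hR0 : 0 < R_0)
    (hlamS : 0 < lamS) (hNm : 0 < N_m) (hNf : 0 < N_f) :
    ∃ b ∈ Icc 0 B, separateServiceRevenue α κ B R_0 lamS N_m N_f 0 0
      < separateServiceRevenue α κ B R_0 lamS N_m N_f 0 b := by
  set X := B * R_0 / N_m
  obtain ⟨b, hb, hgain⟩ := exists_mem_Ioc_mul_lt_mul_rpow (K := R_0 * (X / 2) ^ (-α)) hα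
    (K' := N_f * (lamS * R_0 / N_f) ^ (1 - α)) (by positivity) (half_pos hB)
  refine ⟨b, ⟨hb.1.le, by linarith [hb.2]⟩, ?_⟩
  have hY : X / 2 ≤ (B - b) * R_0 / N_m := by
    have : B / 2 ≤ B - b := by linarith [hb.2]
    calc X / 2 = B / 2 * R_0 / N_m := by ring
      _ ≤ (B - b) * R_0 / N_m := by gcongr
  have hYpos : 0 < (B - b) * R_0 / N_m := (by positivity : 0 < X / 2).trans_le hY
  have hYX : (B - b) * R_0 / N_m ≤ X := by
    simp only [X]
    gcongr
    linarith [hb.1]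
  have hloss : N_m * (X ^ (1 - α) - ((B - b) * R_0 / N_m) ^ (1 - α))
      ≤ R_0 * (X / 2) ^ (-α) * b :=
    calc N_m * (X ^ (1 - α) - ((B - b) * R_0 / N_m) ^ (1 - α))
        ≤ N_m * ((X - (B - b) * R_0 / N_m) * ((B - b) * R_0 / N_m) ^ (-α)) := by
          gcongr
          exact rpow_one_sub_sub_rpow_one_sub_le hα.le hYpos hYX
      _ = R_0 * ((B - b) * R_0 / N_m) ^ (-α) * b := by
          simp only [X]
          field_simp
          ring
      _ ≤ R_0 * (X / 2) ^ (-α) * b := by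
          refine mul_le_mul_of_nonneg_right (mul_le_mul_of_nonneg_left ?_ hR0.le) hb.1.le
          exact rpow_le_rpow_of_nonpos (by positivity) hY (neg_nonpos.2 hα.le)
  rw [zero_apply hκ hNf hlamS hR0 le_rfl, zero_apply hκ hNf hlamS hR0 hb.1.le,
    zero_rpow (sub_ne_zero.2 hα1.ne'), sub_zero]
  linarith

end separateServiceRevenue

/-- for every `C_U > 0`, the maximum of the separate-service revenue
`S(·; C_U)` over `[0, B]` is strictly less than the maximum of `S(·; 0)` over `[0, B]`:
the monopolist's optimal revenue with unlicensed spectrum is strictly less than without. -/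
theorem stmt11 (α κ B R_0 lamS N_m N_f C_U : ℝ)
    (hα0 : 0 < α) (hα1 : α < 1) (hκ : κ = α ^ (1 / (1 - α)))
    (hB : 0 < B) (hR0 : 0 < R_0) (hlamS : 0 < lamS) (hNm : 0 < N_m) (hNf : 0 < N_f)
    (hCU : 0 < C_U) :
    ∀ xC x0 : ℝ, xC ∈ Icc (0 : ℝ) B → x0 ∈ Icc (0 : ℝ) B →
      IsMaxOn (fun b : ℝ =>
          N_m * ((B - b) * R_0 / N_m) ^ (1 - α)
            + N_f * ((κ * lamS * b * R_0 + C_U) / (κ * N_f)) ^ (1 - α)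
            - (C_U / κ) * ((κ * lamS * b * R_0 + C_U) / (κ * N_f)) ^ (-α)) (Icc 0 B) xC →
      IsMaxOn (fun b : ℝ =>
          N_m * ((B - b) * R_0 / N_m) ^ (1 - α)
            + N_f * ((κ * lamS * b * R_0 + 0) / (κ * N_f)) ^ (1 - α)
            - (0 / κ) * ((κ * lamS * b * R_0 + 0) / (κ * N_f)) ^ (-α)) (Icc 0 B) x0 →
      N_m * ((B - xC) * R_0 / N_m) ^ (1 - α)
          + N_f * ((κ * lamS * xC * R_0 + C_U) / (κ * N_f)) ^ (1 - α)
          - (C_U / κ) * ((κ * lamS * xC * R_0 + C_U) / (κ * N_f)) ^ (-α)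
        < N_m * ((B - x0) * R_0 / N_m) ^ (1 - α)
            + N_f * ((κ * lamS * x0 * R_0 + 0) / (κ * N_f)) ^ (1 - α)
            - (0 / κ) * ((κ * lamS * x0 * R_0 + 0) / (κ * N_f)) ^ (-α) := by
  intro xC x0 hxC _ _ hmax0
  change separateServiceRevenue α κ B R_0 lamS N_m N_f C_U xC
    < separateServiceRevenue α κ B R_0 lamS N_m N_f 0 x0
  have hκ0 : 0 < κ := hκ ▸ rpow_pos_of_pos hα0 _
  rcases hxC.1.eq_or_lt with rfl | hxC0
  · obtain ⟨b, hb, hgt⟩ :=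
      separateServiceRevenue.exists_zero_apply_gt hα0 hα1 hκ0.ne' hB hR0 hlamS hNm hNf
    rw [separateServiceRevenue.apply_zero hα1 hκ0 hNf hCU.le]
    exact hgt.trans_le (hmax0 hb)
  · exact (separateServiceRevenue.lt_zero_apply hα0 hα1 hκ0 hNf hlamS hR0 hCU hxC0).trans_le
      (hmax0 hxC)
end

section
/- Let α ∈ (0,1), κ = α^{1/(1-α)}, and let B, R_0, λ_S, N_m, N_f > 0 and C_U > 0. Let B_S^{sw}(C_U) be the unique maximizer over [0, B] of the separate-service social welfare SW(B_S; C_U) = N_m·u((B−B_S)R_0/N_m) + N_f·u(R_S) − (C_U/κ)·R_S^{-α} with R_S = (κλ_S B_S R_0 + C_U)/(κN_f), and let B̃_S = N_f B/(N_f + N_m λ_S^{1−1/α}) be the maximizer when C_U = 0. Then for every C_U > 0, B_S^{sw}(C_U) < B̃_S: with unlicensed spectrum a welfare-maximizing monopolist always allocates strictly less bandwidth to small cells than without it. -/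
/-!
With `A` the macro rate, `R` the small-cell rate and `d = C_U / (κ N_f)`, the welfare derivative is
`R_0 (λ_S g(R) - A^(-α))` where `g(s) = s^(-α) + α d s^(-α-1)`. At `B̃_S` the first-order condition
without unlicensed spectrum reads `A^(-α) = λ_S r^(-α)` with `r = λ_S B̃_S R_0 / N_f`, and there
`R ≥ r + d`. The tangent-line inequality for the convex `s ↦ s^(-α)` gives `g(r + d) < r^(-α)`, so
the derivative is negative on `[B̃_S, B)` and the maximizer lies strictly left of `B̃_S`.
-/

open Real Set

theorem one_add_rpow_neg_add_mul_lt_one {α t : ℝ} (hα : 0 < α) (ht : 0 < t) :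
    (1 + t) ^ (-α) + α * t * (1 + t) ^ (-α - 1) < 1 := by
  have h1t : 0 < 1 + t := by linarith
  have hpos : 0 < (1 + t) ^ (-α - 1) := rpow_pos_of_pos h1t _
  have hbern : 1 + (1 + α) * t < (1 + t) ^ (1 + α) :=
    one_add_mul_self_lt_rpow_one_add (by linarith) ht.ne' (by linarith)
  calc (1 + t) ^ (-α) + α * t * (1 + t) ^ (-α - 1)
      = (1 + t) ^ (-α - 1) * (1 + (1 + α) * t) := by
        rw [show -α = (-α - 1) + 1 by ring, rpow_add h1t, rpow_one, sub_add_cancel]; ring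
    _ < (1 + t) ^ (-α - 1) * (1 + t) ^ (1 + α) := mul_lt_mul_of_pos_left hbern hpos
    _ = 1 := by rw [← rpow_add h1t, show -α - 1 + (1 + α) = 0 by ring, rpow_zero]

-- The tangent line of the convex `s ↦ s ^ (-α)` at `r + d` lies strictly below it at `r`.
theorem rpow_neg_add_mul_lt_rpow_neg {α r d : ℝ} (hα : 0 < α) (hr : 0 < r) (hd : 0 < d) :
    (r + d) ^ (-α) + α * d * (r + d) ^ (-α - 1) < r ^ (-α) := by
  have hscale : ∀ p : ℝ, (r + d) ^ p = r ^ p * (1 + d / r) ^ p := fun p => by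
    rw [← mul_rpow hr.le (by positivity), mul_add, mul_one, mul_div_cancel₀ _ hr.ne']
  calc (r + d) ^ (-α) + α * d * (r + d) ^ (-α - 1)
      = r ^ (-α) * ((1 + d / r) ^ (-α) + α * (d / r) * (1 + d / r) ^ (-α - 1)) := by
        rw [hscale, hscale, rpow_sub hr, rpow_one]; field_simp
    _ < r ^ (-α) := mul_lt_of_lt_one_right (rpow_pos_of_pos hr _)
        (one_add_rpow_neg_add_mul_lt_one hα (div_pos hd hr))

theorem lt_of_isMaxOn_of_hasDerivAt_neg {f f' : ℝ → ℝ} {a b c x : ℝ} (hac : a < c) (hcb : c < b)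
    (hcont : ContinuousOn f (Icc a b)) (hderiv : ∀ y ∈ Ico c b, HasDerivAt f (f' y) y)
    (hneg : ∀ y ∈ Ico c b, f' y < 0) (hx : x ∈ Icc a b) (hmax : IsMaxOn f (Icc a b) x) :
    x < c := by
  by_contra! hcx
  obtain rfl | hcx := hcx.eq_or_lt
  · have hc : c ∈ Ico c b := ⟨le_rfl, hcb⟩
    exact (hneg c hc).ne <|
      (hmax.isLocalMax (Icc_mem_nhds hac hcb)).hasDerivAt_eq_zero (hderiv c hc)
  · have hanti : StrictAntiOn f (Icc c b) := by
      refine strictAntiOn_of_deriv_neg (convex_Icc c b)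
        (hcont.mono (Icc_subset_Icc_left hac.le)) fun y hy => ?_
      rw [interior_Icc] at hy
      rw [(hderiv y ⟨hy.1.le, hy.2⟩).deriv]
      exact hneg y ⟨hy.1.le, hy.2⟩
    exact (hanti (left_mem_Icc.2 hcb.le) ⟨hcx.le, hx.2⟩ hcx).not_ge (hmax ⟨hac.le, hcb.le⟩)

noncomputable section Welfare

variable (α κ B R_0 lamS N_m N_f C_U : ℝ)

def macroRate (x : ℝ) : ℝ := (B - x) * R_0 / N_m

def smallCellRate (x : ℝ) : ℝ := (κ * lamS * x * R_0 + C_U) / (κ * N_f)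

def welfare (x : ℝ) : ℝ :=
  N_m * (macroRate B R_0 N_m x ^ (1 - α) / (1 - α))
    + N_f * (smallCellRate κ R_0 lamS N_f C_U x ^ (1 - α) / (1 - α))
    - (C_U / κ) * smallCellRate κ R_0 lamS N_f C_U x ^ (-α)

-- The derivative of `s ↦ s ^ (1 - α) / (1 - α) - d * s ^ (-α)`.
def smallCellMarginal (d s : ℝ) : ℝ := s ^ (-α) + α * d * s ^ (-α - 1)

def welfareDeriv (x : ℝ) : ℝ :=
  R_0 * (lamS * smallCellMarginal α (C_U / (κ * N_f)) (smallCellRate κ R_0 lamS N_f C_U x)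
    - macroRate B R_0 N_m x ^ (-α))

def noUnlicensedAlloc : ℝ := N_f * B / (N_f + N_m * lamS ^ (1 - 1 / α))

variable {α κ B R_0 lamS N_m N_f C_U}

theorem smallCellRate_eq (hκ : κ ≠ 0) (x : ℝ) :
    smallCellRate κ R_0 lamS N_f C_U x = lamS * x * R_0 / N_f + C_U / (κ * N_f) := by
  unfold smallCellRate; field_simp

theorem smallCellRate_pos (hκ : 0 < κ) (hlamS : 0 ≤ lamS) (hR0 : 0 ≤ R_0) (hNf : 0 < N_f)
    (hCU : 0 < C_U) {x : ℝ} (hx : 0 ≤ x) : 0 < smallCellRate κ R_0 lamS N_f C_U x := by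
  unfold smallCellRate; positivity

theorem macroRate_pos (hR0 : 0 < R_0) (hNm : 0 < N_m) {x : ℝ} (hx : x < B) :
    0 < macroRate B R_0 N_m x :=
  div_pos (mul_pos (sub_pos.2 hx) hR0) hNm

theorem hasDerivAt_welfare (hα : α ≠ 1) (hκ : κ ≠ 0) (hNm : N_m ≠ 0) (hNf : N_f ≠ 0) {x : ℝ}
    (hA : macroRate B R_0 N_m x ≠ 0) (hR : smallCellRate κ R_0 lamS N_f C_U x ≠ 0) :
    HasDerivAt (welfare α κ B R_0 lamS N_m N_f C_U)
      (welfareDeriv α κ B R_0 lamS N_m N_f C_U x) x := by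
  have h1α : 1 - α ≠ 0 := sub_ne_zero.2 hα.symm
  have hA' : HasDerivAt (macroRate B R_0 N_m) (-1 * R_0 / N_m) x := by
    unfold macroRate
    exact (((hasDerivAt_id' x).const_sub B).mul_const R_0).div_const N_m
  have hR' : HasDerivAt (smallCellRate κ R_0 lamS N_f C_U) (κ * lamS * 1 * R_0 / (κ * N_f)) x := by
    unfold smallCellRate
    exact ((((hasDerivAt_id' x).const_mul (κ * lamS)).mul_const R_0).add_const C_U).div_const (κ * N_f)
  have h := ((((hA'.rpow_const (p := 1 - α) (.inl hA)).div_const (1 - α)).const_mul N_m).add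
    (((hR'.rpow_const (p := 1 - α) (.inl hR)).div_const (1 - α)).const_mul N_f)).sub
    ((hR'.rpow_const (p := -α) (.inl hR)).const_mul (C_U / κ))
  rw [show 1 - α - 1 = -α by ring] at h
  refine h.congr_deriv ?_
  unfold welfareDeriv smallCellMarginal
  field_simp
  ring

theorem continuousOn_welfare (hα : α ≤ 1) (hκ : 0 < κ) (hlamS : 0 ≤ lamS) (hR0 : 0 ≤ R_0)
    (hNf : 0 < N_f) (hCU : 0 < C_U) :
    ContinuousOn (welfare α κ B R_0 lamS N_m N_f C_U) (Ici 0) := by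
  have hR : ContinuousOn (smallCellRate κ R_0 lamS N_f C_U) (Ici 0) := by
    unfold smallCellRate; fun_prop
  have hA : ContinuousOn (macroRate B R_0 N_m) (Ici 0) := by
    unfold macroRate; fun_prop
  exact ((continuousOn_const.mul ((hA.rpow_const fun _ _ => .inr (sub_nonneg.2 hα)).div_const _)).add
    (continuousOn_const.mul ((hR.rpow_const fun _ _ => .inr (sub_nonneg.2 hα)).div_const _))).sub
    (continuousOn_const.mul (hR.rpow_const fun x hx =>
      .inl (smallCellRate_pos hκ hlamS hR0 hNf hCU hx).ne'))

theorem smallCellMarginal_le_of_le (hα : 0 ≤ α) {d s t : ℝ} (hd : 0 ≤ d) (hs : 0 < s)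
    (hst : s ≤ t) : smallCellMarginal α d t ≤ smallCellMarginal α d s := by
  unfold smallCellMarginal
  gcongr ?_ + α * d * ?_ <;> exact rpow_le_rpow_of_nonpos hs hst (by linarith)

theorem noUnlicensedAlloc_pos (hB : 0 < B) (hlamS : 0 < lamS) (hNm : 0 ≤ N_m) (hNf : 0 < N_f) :
    0 < noUnlicensedAlloc α B lamS N_m N_f := by
  unfold noUnlicensedAlloc; positivity

theorem noUnlicensedAlloc_lt (hB : 0 < B) (hlamS : 0 < lamS) (hNm : 0 < N_m) (hNf : 0 < N_f) :
    noUnlicensedAlloc α B lamS N_m N_f < B := by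
  have hL : 0 < N_m * lamS ^ (1 - 1 / α) := mul_pos hNm (rpow_pos_of_pos hlamS _)
  unfold noUnlicensedAlloc
  rw [div_lt_iff₀ (by positivity)]
  nlinarith

theorem macroRate_noUnlicensedAlloc_rpow (hα : α ≠ 0) (hB : 0 ≤ B) (hR0 : 0 ≤ R_0)
    (hlamS : 0 < lamS) (hNm : 0 < N_m) (hNf : 0 < N_f) :
    macroRate B R_0 N_m (noUnlicensedAlloc α B lamS N_m N_f) ^ (-α)
      = lamS * (lamS * noUnlicensedAlloc α B lamS N_m N_f * R_0 / N_f) ^ (-α) := by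
  have hsplit : lamS ^ (1 - 1 / α) = lamS * lamS ^ (-(1 / α)) := by
    rw [sub_eq_add_neg, rpow_add hlamS, rpow_one]
  have hD : 0 < N_f + N_m * (lamS * lamS ^ (-(1 / α))) := by positivity
  have hA : macroRate B R_0 N_m (noUnlicensedAlloc α B lamS N_m N_f)
      = lamS ^ (-(1 / α)) * (lamS * noUnlicensedAlloc α B lamS N_m N_f * R_0 / N_f) := by
    unfold macroRate noUnlicensedAlloc
    rw [hsplit]
    field_simp
    ring
  rw [hA, mul_rpow (by positivity) (by unfold noUnlicensedAlloc; positivity), ← rpow_mul hlamS.le,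
    neg_mul_neg, one_div, inv_mul_cancel₀ hα, rpow_one]

theorem welfareDeriv_neg (hα : 0 < α) (hκ : 0 < κ) (hB : 0 < B) (hR0 : 0 < R_0)
    (hlamS : 0 < lamS) (hNm : 0 < N_m) (hNf : 0 < N_f) (hCU : 0 < C_U) {x : ℝ}
    (hBx : noUnlicensedAlloc α B lamS N_m N_f ≤ x) (hxB : x < B) :
    welfareDeriv α κ B R_0 lamS N_m N_f C_U x < 0 := by
  set Bt := noUnlicensedAlloc α B lamS N_m N_f
  set r := lamS * Bt * R_0 / N_f
  set d := C_U / (κ * N_f)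
  have hBt : 0 < Bt := noUnlicensedAlloc_pos hB hlamS hNm.le hNf
  have hr : 0 < r := by positivity
  have hd : 0 < d := by positivity
  have hR : r + d ≤ smallCellRate κ R_0 lamS N_f C_U x := by
    rw [smallCellRate_eq hκ.ne']
    unfold r
    gcongr
  have hA : lamS * r ^ (-α) ≤ macroRate B R_0 N_m x ^ (-α) := by
    rw [← macroRate_noUnlicensedAlloc_rpow hα.ne' hB.le hR0.le hlamS hNm hNf]
    refine rpow_le_rpow_of_nonpos (macroRate_pos hR0 hNm hxB) ?_ (by linarith)
    unfold macroRate
    gcongr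
  have hmarg : smallCellMarginal α d (smallCellRate κ R_0 lamS N_f C_U x) < r ^ (-α) :=
    (smallCellMarginal_le_of_le hα.le hd.le (by positivity) hR).trans_lt
      (rpow_neg_add_mul_lt_rpow_neg hα hr hd)
  exact mul_neg_of_pos_of_neg hR0 (sub_neg.2 ((mul_lt_mul_of_pos_left hmarg hlamS).trans_le hA))

end Welfare

/-- for every `C_U > 0`, the welfare-optimal small-cell allocation
`B_S^sw(C_U)` is strictly less than the no-unlicensed optimum
`B̃_S = N_f·B/(N_f + N_m·λ_S^(1−1/α))`. -/
theorem stmt13 (α κ B R_0 lamS N_m N_f C_U Bsw : ℝ)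
    (hα0 : 0 < α) (hα1 : α < 1) (hκ : κ = α ^ (1 / (1 - α)))
    (hB : 0 < B) (hR0 : 0 < R_0) (hlamS : 0 < lamS) (hNm : 0 < N_m) (hNf : 0 < N_f)
    (hCU : 0 < C_U)
    (hmem : Bsw ∈ Icc (0 : ℝ) B)
    (hmax : IsMaxOn (fun B_S : ℝ =>
        N_m * (((B - B_S) * R_0 / N_m) ^ (1 - α) / (1 - α))
          + N_f * (((κ * lamS * B_S * R_0 + C_U) / (κ * N_f)) ^ (1 - α) / (1 - α))
          - (C_U / κ) * ((κ * lamS * B_S * R_0 + C_U) / (κ * N_f)) ^ (-α)) (Icc 0 B) Bsw) :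
    Bsw < N_f * B / (N_f + N_m * lamS ^ (1 - 1 / α)) := by
  have hκ0 : 0 < κ := hκ ▸ rpow_pos_of_pos hα0 _
  have hBt := noUnlicensedAlloc_pos (α := α) hB hlamS hNm.le hNf
  refine lt_of_isMaxOn_of_hasDerivAt_neg (f := welfare α κ B R_0 lamS N_m N_f C_U)
    (f' := welfareDeriv α κ B R_0 lamS N_m N_f C_U) hBt (noUnlicensedAlloc_lt hB hlamS hNm hNf)
    ((continuousOn_welfare hα1.le hκ0 hlamS.le hR0.le hNf hCU).mono Icc_subset_Ici_self)
    (fun x hx => ?_) (fun x hx => welfareDeriv_neg hα0 hκ0 hB hR0 hlamS hNm hNf hCU hx.1 hx.2)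
    hmem hmax
  exact hasDerivAt_welfare hα1.ne hκ0.ne' hNm.ne' hNf.ne' (macroRate_pos hR0 hNm hx.2).ne'
    (smallCellRate_pos hκ0 hlamS.le hR0.le hNf hCU (hBt.le.trans hx.1)).ne'
end

section
/- Let α ∈ (0,1) and κ = α^{1/(1-α)}. Then for all b > 0 and C > 0: (κ^{α} + κ)·C·b^{α} + κ^{α+1}·b^{α+1} < (κ·b + C)^{α+1}, with equality when C = 0. -/
open Real

/-! After substituting `x = κ b`, the identity `κ = α κ^α` (which is `κ^(1-α) = α`) turns the
left-hand side into `x^(α+1) + (α+1) C x^α`, the tangent line of the strictly convex function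
`t ↦ t^(α+1)` at `x` evaluated at `x + C`; strict convexity (Bernoulli's inequality) gives the
strict inequality. -/

theorem rpow_add_mul_rpow_sub_one_lt {p x h : ℝ} (hp : 1 < p) (hx : 0 < x) (hxh : -x ≤ h)
    (hh : h ≠ 0) : x ^ p + p * h * x ^ (p - 1) < (x + h) ^ p := by
  have hhx : -1 ≤ h / x := by rw [le_div_iff₀ hx]; linarith
  have hbern : 1 + p * (h / x) < (1 + h / x) ^ p :=
    one_add_mul_self_lt_rpow_one_add hhx (div_ne_zero hh hx.ne') hp
  have hxp : 0 < x ^ p := rpow_pos_of_pos hx p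
  calc x ^ p + p * h * x ^ (p - 1) = (1 + p * (h / x)) * x ^ p := by
        rw [rpow_sub hx, rpow_one]; field_simp
    _ < (1 + h / x) ^ p * x ^ p := mul_lt_mul_of_pos_right hbern hxp
    _ = (x + h) ^ p := by
        rw [← mul_rpow (by linarith) hx.le]
        congr 1; field_simp

theorem rpow_one_div_one_sub_eq_rpow_mul {a α : ℝ} (ha : 0 < a) (hα : α ≠ 1) :
    a ^ (1 / (1 - α)) = (a ^ (1 / (1 - α))) ^ α * a := by
  set κ := a ^ (1 / (1 - α))
  have hκ : κ ^ (1 - α) = a := by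
    rw [← rpow_mul ha.le, one_div_mul_cancel (sub_ne_zero.mpr hα.symm), rpow_one]
  calc κ = κ ^ (α + (1 - α)) := by rw [add_sub_cancel, rpow_one]
    _ = κ ^ α * a := by rw [rpow_add (rpow_pos_of_pos ha _), hκ]

/-- with `κ = α^(1/(1-α))`, for all `b > 0` and `C > 0`:
`(κ^α + κ)·C·b^α + κ^(α+1)·b^(α+1) < (κ·b + C)^(α+1)`, with equality when `C = 0`. -/
theorem stmt14 (α κ : ℝ) (hα0 : 0 < α) (hα1 : α < 1) (hκ : κ = α ^ (1 / (1 - α))) :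
    (∀ b C : ℝ, 0 < b → 0 < C →
      (κ ^ α + κ) * C * b ^ α + κ ^ (α + 1) * b ^ (α + 1) < (κ * b + C) ^ (α + 1)) ∧
    (∀ b : ℝ, 0 < b →
      (κ ^ α + κ) * 0 * b ^ α + κ ^ (α + 1) * b ^ (α + 1) = (κ * b + 0) ^ (α + 1)) := by
  have hκ0 : 0 < κ := hκ ▸ rpow_pos_of_pos hα0 _
  have hκα : κ = κ ^ α * α := hκ ▸ rpow_one_div_one_sub_eq_rpow_mul hα0 hα1.ne
  refine ⟨fun b C hb hC => ?_, fun b hb => ?_⟩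
  · have hx : 0 < κ * b := mul_pos hκ0 hb
    calc (κ ^ α + κ) * C * b ^ α + κ ^ (α + 1) * b ^ (α + 1)
        = (κ * b) ^ (α + 1) + (α + 1) * C * (κ * b) ^ (α + 1 - 1) := by
          rw [add_sub_cancel_right, mul_rpow hκ0.le hb.le, mul_rpow hκ0.le hb.le]
          nth_rewrite 2 [hκα]; ring
      _ < (κ * b + C) ^ (α + 1) :=
          rpow_add_mul_rpow_sub_one_lt (by linarith) hx (by linarith) hC.ne'
  · rw [mul_zero, zero_mul, zero_add, add_zero, mul_rpow hκ0.le hb.le]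
end

section
/- Let α ∈ (0,1), κ = α^{1/(1-α)}, let N ≥ 1 and B_1, …, B_N > 0 with T = B_1 + ⋯ + B_N and B_max = max_i B_i, and let R_0, λ_S, N_f, N_m, C_U > 0. Then the inequalities λ_S·(C_U/(κ·N_f))^{-α} ≤ (T·R_0/N_m)^{-α}·(1 − α·B_i/T) hold simultaneously for all i ∈ {1,…,N} if and only if C_U ≥ (R_0·T/(1 − α·B_max/T)^{1/α})·(κ·N_f·λ_S^{1/α}/N_m). (These inequalities are the first-order conditions for no SP to profit from moving bandwidth to small cells, so this is exactly the condition for a Macro-only Nash Equilibrium.) -/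
/-!
Since `1 - α B_i / T` is decreasing in `B_i`, all the conditions hold iff the one for the largest
SP does. For that one, write `P = T R_0 / N_m`, `D = 1 - α B_max / T > 0` and `x = C_U / (κ N_f)`:
the inequality `λ_S x^(-α) ≤ P^(-α) D` says `x^(-α) ≤ y^(-α)` for `y = P λ_S^(1/α) / D^(1/α)`,
i.e. `y ≤ x`, because `t ↦ t^(-α)` is strictly decreasing on `(0, ∞)`.
-/

open Real

theorem forall_le_comp_iff_of_antitone {ι α β : Type*} [Preorder α] [Preorder β] {f : α → β}
    (hf : Antitone f) {B : ι → α} {M : α} (hub : ∀ i, B i ≤ M) (hmem : ∃ i, B i = M) (c : β) :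
    (∀ i, c ≤ f (B i)) ↔ c ≤ f M := by
  obtain ⟨i₀, rfl⟩ := hmem
  exact ⟨fun h ↦ h i₀, fun h i ↦ h.trans (hf (hub i))⟩

theorem rpow_neg_mul_rpow_one_div_div {a P D c : ℝ} (ha : 0 < a) (hP : 0 < P) (hD : 0 < D)
    (hc : 0 < c) : (P * c ^ (1 / a) / D ^ (1 / a)) ^ (-a) = P ^ (-a) * D / c := by
  have h : ∀ {u : ℝ}, 0 < u → (u ^ (1 / a)) ^ (-a) = u⁻¹ := fun hu ↦ by
    rw [← rpow_mul hu.le, one_div, inv_mul_eq_div, neg_div, div_self ha.ne', rpow_neg_one]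
  rw [div_rpow (by positivity) (by positivity), mul_rpow hP.le (by positivity), h hc, h hD]
  field_simp

theorem mul_rpow_neg_le_rpow_neg_mul_iff {a x P D c : ℝ} (ha : 0 < a) (hx : 0 < x) (hP : 0 < P)
    (hD : 0 < D) (hc : 0 < c) :
    c * x ^ (-a) ≤ P ^ (-a) * D ↔ P * c ^ (1 / a) / D ^ (1 / a) ≤ x := by
  rw [← rpow_le_rpow_iff_of_neg hx (by positivity) (neg_lt_zero.2 ha),
    rpow_neg_mul_rpow_one_div_div ha hP hD hc, le_div_iff₀ hc, mul_comm]

theorem stmt15_general (α κ R_0 lamS N_f N_m C_U Bmax : ℝ) (N : ℕ)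
    (B : Fin N → ℝ) (hBpos : ∀ i, 0 < B i)
    (hα0 : 0 < α) (hα1 : α < 1) (hκ : κ = α ^ (1 / (1 - α)))
    (hR0 : 0 < R_0) (hlamS : 0 < lamS) (hNf : 0 < N_f) (hNm : 0 < N_m) (hCU : 0 < C_U)
    (hBmax_ub : ∀ i, B i ≤ Bmax) (hBmax_mem : ∃ i, B i = Bmax) :
    (∀ i, lamS * (C_U / (κ * N_f)) ^ (-α)
        ≤ ((∑ j, B j) * R_0 / N_m) ^ (-α) * (1 - α * B i / (∑ j, B j)))
    ↔ R_0 * (∑ j, B j) / (1 - α * Bmax / (∑ j, B j)) ^ (1 / α)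
        * (κ * N_f * lamS ^ (1 / α) / N_m) ≤ C_U := by
  set T := ∑ j, B j
  obtain ⟨i₀, hi₀⟩ := hBmax_mem
  have hT : 0 < T := Finset.sum_pos (fun j _ ↦ hBpos j) ⟨i₀, Finset.mem_univ i₀⟩
  have hBmax_le : Bmax ≤ T :=
    hi₀ ▸ Finset.single_le_sum (fun j _ ↦ (hBpos j).le) (Finset.mem_univ i₀)
  have hD : 0 < 1 - α * Bmax / T := by
    have : α * Bmax / T ≤ α := by rw [div_le_iff₀ hT]; nlinarith
    linarith
  have hκ_pos : 0 < κ := hκ ▸ rpow_pos_of_pos hα0 _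
  have hanti : Antitone fun b ↦ (T * R_0 / N_m) ^ (-α) * (1 - α * b / T) := fun _ _ h ↦ by
    dsimp only
    gcongr
  rw [forall_le_comp_iff_of_antitone hanti hBmax_ub ⟨i₀, hi₀⟩,
    mul_rpow_neg_le_rpow_neg_mul_iff hα0 (by positivity) (by positivity) hD hlamS,
    le_div_iff₀ (by positivity)]
  exact iff_of_eq (congrArg (· ≤ C_U) (by ring))

/-- the Macro-only Nash Equilibrium first-order conditions
`λ_S·(C_U/(κN_f))^(-α) ≤ (T·R_0/N_m)^(-α)·(1 − α·B_i/T)` hold for all SPs `i`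
iff `C_U ≥ (R_0·T/(1 − α·B_max/T)^(1/α))·(κ·N_f·λ_S^(1/α)/N_m)`. -/
theorem stmt15 (α κ R_0 lamS N_f N_m C_U Bmax : ℝ) (N : ℕ) (hN : 1 ≤ N)
    (B : Fin N → ℝ) (hBpos : ∀ i, 0 < B i)
    (hα0 : 0 < α) (hα1 : α < 1) (hκ : κ = α ^ (1 / (1 - α)))
    (hR0 : 0 < R_0) (hlamS : 0 < lamS) (hNf : 0 < N_f) (hNm : 0 < N_m) (hCU : 0 < C_U)
    (hBmax_ub : ∀ i, B i ≤ Bmax) (hBmax_mem : ∃ i, B i = Bmax) :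
    (∀ i, lamS * (C_U / (κ * N_f)) ^ (-α)
        ≤ ((∑ j, B j) * R_0 / N_m) ^ (-α) * (1 - α * B i / (∑ j, B j)))
    ↔ R_0 * (∑ j, B j) / (1 - α * Bmax / (∑ j, B j)) ^ (1 / α)
        * (κ * N_f * lamS ^ (1 / α) / N_m) ≤ C_U :=
  stmt15_general α κ R_0 lamS N_f N_m C_U Bmax N B hBpos hα0 hα1 hκ hR0 hlamS hNf hNm hCU hBmax_ub
    hBmax_mem
end

section
/- Let α ∈ (0,1), κ = α^{1/(1-α)}, and let B, B_U, R_0, λ_S, λ_U, N_f, N_m > 0 satisfy B_U·λ_U < B·κ·N_f·λ_S^{1/α}/N_m. Then the limiting symmetric-equilibrium system — B_S + B_M = B, B_S > 0, B_M > 0, and (N_m/(B_M·R_0))^{α} = λ_S·(κ·N_f/((κ·B_S·λ_S + B_U·λ_U)·R_0))^{α} — has a unique solution, given by B_S = (B − B_U·λ_U·N_m/(κ·N_f·λ_S^{1/α}))/(1 + λ_S^{1−1/α}·N_m/N_f) and B_M = (B + B_U·λ_U/(κ·λ_S))·(λ_S^{1−1/α}·N_m/N_f)/(1 + λ_S^{1−1/α}·N_m/N_f).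 -/
open Real

/-!
Writing `s = λ_S^(1/α)`, the equation `x^α = λ_S · y^α` between positive reals is just
`x = s · y`, so the first-order condition is linear in the bandwidths:
`B_M = t · (B_S + β)` with `t = λ_S^(1-1/α) N_m / N_f` and `β = B_U λ_U / (κ λ_S)`.
Together with `B_S + B_M = B` this linear system has the displayed unique solution, and the
hypothesis on `B_U λ_U` is exactly `t β < B`, i.e. positivity of `B_S`.
-/

lemma Real.rpow_eq_mul_rpow_iff {x y c z : ℝ} (hx : 0 ≤ x) (hy : 0 ≤ y) (hc : 0 ≤ c)
    (hz : z ≠ 0) : x ^ z = c * y ^ z ↔ x = c ^ z⁻¹ * y := by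
  have h : c * y ^ z = (c ^ z⁻¹ * y) ^ z := by
    rw [mul_rpow (by positivity) hy, rpow_inv_rpow hc hz]
  rw [h, rpow_left_inj hx (by positivity) hz]

lemma add_eq_and_eq_mul_add_iff {K : Type*} [Field K] {x y B t β : K} (ht : 1 + t ≠ 0) :
    (x + y = B ∧ y = t * (x + β)) ↔
      (x = (B - t * β) / (1 + t) ∧ y = (B + β) * t / (1 + t)) := by
  constructor
  · rintro ⟨hsum, rfl⟩
    constructor
    · rw [eq_div_iff ht]; linear_combination hsum
    · rw [eq_div_iff ht]; linear_combination t * hsum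
  · rintro ⟨rfl, rfl⟩
    constructor <;> field_simp <;> ring

lemma macro_small_marginal_revenue_eq_iff {α κ R_0 lamS B_U lamU N_f N_m B_S B_M : ℝ}
    (hα : α ≠ 0) (hκ : 0 < κ) (hR0 : 0 < R_0) (hlamS : 0 < lamS) (hNf : 0 < N_f)
    (hNm : 0 < N_m) (hBM : 0 < B_M) (hD : 0 < κ * B_S * lamS + B_U * lamU) :
    (N_m / (B_M * R_0)) ^ α = lamS * (κ * N_f / ((κ * B_S * lamS + B_U * lamU) * R_0)) ^ α ↔
      B_M = lamS ^ (1 - 1 / α) * N_m / N_f * (B_S + B_U * lamU / (κ * lamS)) := by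
  have hs : 0 < lamS ^ (1 / α) := rpow_pos_of_pos hlamS _
  rw [rpow_eq_mul_rpow_iff (by positivity) (by positivity) hlamS.le hα, rpow_sub hlamS,
    rpow_one, ← one_div]
  field_simp
  exact eq_comm

theorem stmt16_general (α κ B B_U R_0 lamS lamU N_f N_m : ℝ)
    (hα0 : 0 < α) (hκ : κ = α ^ (1 / (1 - α)))
    (hBU : 0 < B_U) (hR0 : 0 < R_0) (hlamS : 0 < lamS) (hlamU : 0 < lamU)
    (hNf : 0 < N_f) (hNm : 0 < N_m)
    (hcond : B_U * lamU < B * κ * N_f * lamS ^ (1 / α) / N_m) :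
    ∀ B_S B_M : ℝ,
      (B_S + B_M = B ∧ 0 < B_S ∧ 0 < B_M ∧
        (N_m / (B_M * R_0)) ^ α
          = lamS * (κ * N_f / ((κ * B_S * lamS + B_U * lamU) * R_0)) ^ α)
      ↔ (B_S = (B - B_U * lamU * N_m / (κ * N_f * lamS ^ (1 / α)))
            / (1 + lamS ^ (1 - 1 / α) * N_m / N_f) ∧
         B_M = (B + B_U * lamU / (κ * lamS)) * (lamS ^ (1 - 1 / α) * N_m / N_f)
            / (1 + lamS ^ (1 - 1 / α) * N_m / N_f)) := by
  intro B_S B_M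
  have hκpos : 0 < κ := hκ ▸ rpow_pos_of_pos hα0 _
  have hs : 0 < lamS ^ (1 / α) := rpow_pos_of_pos hlamS _
  set t := lamS ^ (1 - 1 / α) * N_m / N_f
  set β := B_U * lamU / (κ * lamS)
  have ht : 0 < t := by positivity
  have htβ : B_U * lamU * N_m / (κ * N_f * lamS ^ (1 / α)) = t * β := by
    simp only [t, β, rpow_sub hlamS, rpow_one]
    field_simp
  have htβ_lt : t * β < B := by
    rw [← htβ, div_lt_iff₀ (by positivity)]
    linear_combination (lt_div_iff₀ hNm).mp hcond
  rw [htβ, ← add_eq_and_eq_mul_add_iff (by positivity)]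
  constructor
  · rintro ⟨hsum, hBS, hBM, heq⟩
    exact ⟨hsum, (macro_small_marginal_revenue_eq_iff hα0.ne' hκpos hR0 hlamS hNf hNm hBM
      (by positivity)).mp heq⟩
  · rintro ⟨hsum, hlin⟩
    have hBS : 0 < B_S := by nlinarith
    have hBM : 0 < B_M := hlin ▸ by positivity
    exact ⟨hsum, hBS, hBM, (macro_small_marginal_revenue_eq_iff hα0.ne' hκpos hR0 hlamS hNf hNm
      hBM (by positivity)).mpr hlin⟩

/-- under `B_U·λ_U < B·κ·N_f·λ_S^(1/α)/N_m`, the limiting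
symmetric-equilibrium system has the unique solution
`B_S = (B − B_U·λ_U·N_m/(κ·N_f·λ_S^(1/α)))/(1 + λ_S^(1−1/α)·N_m/N_f)` and
`B_M = (B + B_U·λ_U/(κ·λ_S))·(λ_S^(1−1/α)·N_m/N_f)/(1 + λ_S^(1−1/α)·N_m/N_f)`. -/
theorem stmt16 (α κ B B_U R_0 lamS lamU N_f N_m : ℝ)
    (hα0 : 0 < α) (hα1 : α < 1) (hκ : κ = α ^ (1 / (1 - α)))
    (hB : 0 < B) (hBU : 0 < B_U) (hR0 : 0 < R_0) (hlamS : 0 < lamS) (hlamU : 0 < lamU)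
    (hNf : 0 < N_f) (hNm : 0 < N_m)
    (hcond : B_U * lamU < B * κ * N_f * lamS ^ (1 / α) / N_m) :
    ∀ B_S B_M : ℝ,
      (B_S + B_M = B ∧ 0 < B_S ∧ 0 < B_M ∧
        (N_m / (B_M * R_0)) ^ α
          = lamS * (κ * N_f / ((κ * B_S * lamS + B_U * lamU) * R_0)) ^ α)
      ↔ (B_S = (B - B_U * lamU * N_m / (κ * N_f * lamS ^ (1 / α)))
            / (1 + lamS ^ (1 - 1 / α) * N_m / N_f) ∧
         B_M = (B + B_U * lamU / (κ * lamS)) * (lamS ^ (1 - 1 / α) * N_m / N_f)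
            / (1 + lamS ^ (1 - 1 / α) * N_m / N_f)) :=
  stmt16_general α κ B B_U R_0 lamS lamU N_f N_m hα0 hκ hBU hR0 hlamS hlamU hNf hNm hcond
end

section
/- For every α ∈ (0,1): α^{α/(1−α)} + α ≤ 1 if and only if α ≤ 1/2, with equality if and only if α = 1/2. (In terms of κ = α^{1/(1-α)}, this says κ^{α} + α ≤ 1 exactly for α ∈ (0, 1/2], which is the condition under which a monopolist's market equilibrium with the welfare-optimal licensed/unlicensed split is a Macro-only equilibrium when λ_S = λ_U.) -/
/-!
Taking logarithms, `α ^ (α / (1 - α)) < 1 - α` is equivalent to `α log α < (1 - α) log (1 - α)`,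
so the claim is that `φ(a) = a log a` satisfies `φ(a) < φ(1 - a)` for `a < 1/2` (and the reverse
for `a > 1/2`, by symmetry). Both cases come from the tangent line bound `log t < t - 1`: for
`log a ≤ -1` one compares `φ(a) ≤ -a` with `φ(1 - a) > -a`; for `log a > -1` one applies it to
`t = a / (1 - a)`, which gives `φ(a) - φ(1 - a) < -(1 - 2a)(1 + log a) < 0`.
-/

open Real

namespace Real

lemma mul_log_div_lt_sub {x y : ℝ} (hx : 0 < x) (hy : 0 < y) (hxy : x ≠ y) :
    y * log (x / y) < x - y := by
  have hne : x / y ≠ 1 := fun h => hxy ((div_eq_one_iff_eq hy.ne').mp h)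
  have h := mul_lt_mul_of_pos_left (log_lt_sub_one_of_pos (div_pos hx hy) hne) hy
  rwa [mul_sub, mul_div_cancel₀ x hy.ne', mul_one] at h

lemma mul_log_lt_mul_log_one_sub {a : ℝ} (ha : 0 < a) (ha2 : a < 1 / 2) :
    a * log a < (1 - a) * log (1 - a) := by
  have hb : 0 < 1 - a := by linarith
  rcases le_or_gt (log a) (-1) with hlog | hlog
  · have h := mul_log_div_lt_sub one_pos hb (by linarith)
    rw [one_div, log_inv] at h
    nlinarith
  · have h := mul_log_div_lt_sub ha hb (by linarith)
    rw [log_div ha.ne' hb.ne'] at h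
    nlinarith [mul_pos (by linarith : 0 < log a + 1) (by linarith : 0 < 1 - 2 * a)]

lemma rpow_div_lt_iff_mul_log_lt {a b : ℝ} (ha : 0 < a) (hb : 0 < b) :
    a ^ (a / b) < b ↔ a * log a < b * log b := by
  rw [rpow_lt_iff_lt_log ha hb, div_mul_eq_mul_div, div_lt_iff₀ hb, mul_comm (log b)]

lemma lt_rpow_div_iff_mul_log_lt {a b : ℝ} (ha : 0 < a) (hb : 0 < b) :
    b < a ^ (a / b) ↔ b * log b < a * log a := by
  rw [lt_rpow_iff_log_lt hb ha, div_mul_eq_mul_div, lt_div_iff₀ hb, mul_comm (log b)]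

end Real

/-- for every α ∈ (0,1): `α^(α/(1−α)) + α ≤ 1` iff `α ≤ 1/2`,
with equality iff `α = 1/2`. -/
theorem stmt19 (α : ℝ) (hα0 : 0 < α) (hα1 : α < 1) :
    (α ^ (α / (1 - α)) + α ≤ 1 ↔ α ≤ 1 / 2) ∧
    (α ^ (α / (1 - α)) + α = 1 ↔ α = 1 / 2) := by
  have hβ0 : 0 < 1 - α := by linarith
  rcases lt_trichotomy α (1 / 2) with hlt | rfl | hgt
  · have h : α ^ (α / (1 - α)) < 1 - α :=
      (rpow_div_lt_iff_mul_log_lt hα0 hβ0).mpr (mul_log_lt_mul_log_one_sub hα0 hlt)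
    refine ⟨⟨?_, ?_⟩, ⟨?_, ?_⟩⟩ <;> intro <;> linarith
  · norm_num
  · have hsymm := mul_log_lt_mul_log_one_sub hβ0 (by linarith)
    rw [sub_sub_cancel] at hsymm
    have h : 1 - α < α ^ (α / (1 - α)) := (lt_rpow_div_iff_mul_log_lt hα0 hβ0).mpr hsymm
    refine ⟨⟨?_, ?_⟩, ⟨?_, ?_⟩⟩ <;> intro <;> linarith
end
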